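/- arXiv:2408.01015 — 5 statements merged into one kernel-verified Lean document; each statement's English description precedes it below -/
import Mathlib

section
/- For j ≥ 1 and k ≥ 0 real numbers with k − j ≥ 1, the sum S(x) = ∑_{n ≤ x} φ([x/n]^j)/[x/n]^k equals x·∑_{d ≥ 1} φ(d)/(d^{k−j+2}(d+1)) + O_ε(x^ε) as x → ∞. -/
open Finset Real

private theorem totient_pow' (m j : ℕ) (hj : 1 ≤ j) :
    Nat.totient (m ^ j) = m ^ (j - 1) * Nat.totient m := by
  rcases Nat.eq_zero_or_pos m with rfl | hm
  · rw [Nat.zero_pow (by omega), Nat.totient_zero, Nat.mul_zero]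
  have hmj : m ^ j ≠ 0 := pow_ne_zero _ (by omega)
  rw [Nat.totient_eq_prod_factorization hmj, Nat.totient_eq_prod_factorization (by omega),
    Nat.factorization_pow]
  have hsupp : (j • m.factorization).support = m.factorization.support :=
    Finsupp.support_smul_eq (by omega)
  rw [Finsupp.prod, Finsupp.prod, hsupp]
  have hme : m ^ (j - 1) = ∏ p ∈ m.factorization.support, p ^ (m.factorization p * (j - 1)) := by
    conv_lhs => rw [← Nat.factorization_prod_pow_eq_self (show m ≠ 0 by omega)]
    rw [Finsupp.prod, ← Finset.prod_pow]
    exact Finset.prod_congr rfl fun p _ => by rw [← pow_mul]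
  rw [hme, ← Finset.prod_mul_distrib]
  refine Finset.prod_congr rfl fun p hp => ?_
  have he : 1 ≤ m.factorization p := Nat.one_le_iff_ne_zero.2 (Finsupp.mem_support_iff.1 hp)
  rw [Finsupp.smul_apply, smul_eq_mul, ← mul_assoc, ← pow_add]
  congr 2
  set e := m.factorization p with hE
  clear_value e
  obtain ⟨e', rfl⟩ : ∃ e', e = e' + 1 := ⟨e - 1, by omega⟩
  obtain ⟨i, rfl⟩ : ∃ i, j = i + 1 := ⟨j - 1, by omega⟩
  have h2 : (i+1) * (e'+1) = ((e'+1) * i + e') + 1 := by ring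
  simp [h2]


private theorem abel_id' (f : ℕ → ℝ) (hf0 : f 0 = 0) (N : ℕ) :
    ∑ d ∈ Finset.Icc 1 N, (f d - f (d - 1)) / d
      = (∑ d ∈ Finset.Icc 1 N, f d / (d * (d + 1))) + f N / (N + 1) := by
  induction N with
  | zero => simp [hf0]
  | succ N ih =>
    rw [Finset.sum_Icc_succ_top (by omega), Finset.sum_Icc_succ_top (by omega), ih]
    have h1 : ((N + 1 : ℕ) : ℝ) = (N : ℝ) + 1 := by push_cast; ring
    have h2 : (N + 1 : ℕ) - 1 = N := by omega
    rw [h1, h2]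
    have hN1 : (N : ℝ) + 1 ≠ 0 := by positivity
    have hN2 : (N : ℝ) + 1 + 1 ≠ 0 := by positivity
    field_simp
    ring

private theorem rearrange (f : ℕ → ℝ) (hf0 : f 0 = 0) (x : ℝ) (hx : 2 ≤ x) :
    ∑ n ∈ Finset.Icc 1 ⌊x⌋₊, f ⌊x / (n : ℝ)⌋₊
      = ∑ d ∈ Finset.Icc 1 ⌊x⌋₊, (f d - f (d - 1)) * (⌊x / (d : ℝ)⌋₊ : ℝ) := by
  have hx0 : (0:ℝ) < x := by linarith
  have key : ∀ n d : ℕ, 1 ≤ n → (d ≤ ⌊x / (n:ℝ)⌋₊ ↔ (n:ℝ) * (d:ℝ) ≤ x) := by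
    intro n d hn
    have hn0 : (0:ℝ) < (n:ℝ) := by exact_mod_cast Nat.pos_of_ne_zero (by omega)
    rw [Nat.le_floor_iff (by positivity), le_div_iff₀ hn0, mul_comm]
  have step1 : ∀ m : ℕ, f m = ∑ d ∈ Finset.Icc 1 m, (f d - f (d - 1)) := by
    intro m
    rw [← Finset.Ico_add_one_right_eq_Icc, Finset.sum_Ico_eq_sum_range]
    simp only [Nat.add_sub_cancel]
    have : ∀ i ∈ Finset.range m, f (1 + i) - f (1 + i - 1) = f (i + 1) - f i := by
      intro i _
      congr 2 <;> omega
    rw [Finset.sum_congr rfl this, Finset.sum_range_sub f m, hf0, sub_zero]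
  calc ∑ n ∈ Finset.Icc 1 ⌊x⌋₊, f ⌊x / (n : ℝ)⌋₊
      = ∑ n ∈ Finset.Icc 1 ⌊x⌋₊, ∑ d ∈ Finset.Icc 1 ⌊x / (n:ℝ)⌋₊, (f d - f (d - 1)) := by
        exact Finset.sum_congr rfl fun n _ => step1 _
    _ = ∑ d ∈ Finset.Icc 1 ⌊x⌋₊, ∑ n ∈ Finset.Icc 1 ⌊x / (d:ℝ)⌋₊, (f d - f (d - 1)) := by
        refine Finset.sum_comm' ?_
        intro n d
        simp only [Finset.mem_Icc]
        constructor
        · rintro ⟨⟨hn1, hnN⟩, hd1, hdm⟩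
          have hmul : (n:ℝ) * (d:ℝ) ≤ x := (key n d hn1).1 hdm
          have hmul' : (d:ℝ) * (n:ℝ) ≤ x := by linarith [hmul]
          refine ⟨⟨hn1, (key d n hd1).2 hmul'⟩, hd1, ?_⟩
          refine Nat.le_floor ?_
          calc (d:ℝ) = 1 * (d:ℝ) := by ring
            _ ≤ (n:ℝ) * (d:ℝ) := by
                have : (1:ℝ) ≤ (n:ℝ) := by exact_mod_cast hn1
                have hd0 : (0:ℝ) ≤ (d:ℝ) := by positivity
                nlinarith
            _ ≤ x := hmul
        · rintro ⟨⟨hn1, hnm⟩, hd1, hdN⟩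
          have hmul : (d:ℝ) * (n:ℝ) ≤ x := (key d n hd1).1 hnm
          have hmul' : (n:ℝ) * (d:ℝ) ≤ x := by linarith [hmul]
          refine ⟨⟨hn1, ?_⟩, hd1, (key n d hn1).2 hmul'⟩
          refine Nat.le_floor ?_
          calc (n:ℝ) = (n:ℝ) * 1 := by ring
            _ ≤ (n:ℝ) * (d:ℝ) := by
                have : (1:ℝ) ≤ (d:ℝ) := by exact_mod_cast hd1
                have hn0 : (0:ℝ) ≤ (n:ℝ) := by positivity
                nlinarith
            _ ≤ x := hmul'
    _ = ∑ d ∈ Finset.Icc 1 ⌊x⌋₊, (f d - f (d - 1)) * (⌊x / (d:ℝ)⌋₊ : ℝ) := by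
        refine Finset.sum_congr rfl fun d _ => ?_
        rw [Finset.sum_const, Nat.card_Icc, Nat.add_sub_cancel, nsmul_eq_mul, mul_comm]

set_option maxHeartbeats 1000000 in
/-- For `j ≥ 1`, `k ≥ 0` with `k - j ≥ 1`, the sum
`S(x) = ∑_{n ≤ x} φ([x/n]^j)/[x/n]^k` equals
`x · ∑_{d ≥ 1} φ(d)/(d^{k-j+2}(d+1)) + O_ε(x^ε)`. -/
theorem stmt_0 (j : ℕ) (hj : 1 ≤ j) (k : ℝ) (hk : 0 ≤ k) (hkj : 1 ≤ k - (j : ℝ)) :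
    ∀ ε : ℝ, 0 < ε → ∃ C : ℝ, 0 < C ∧ ∀ x : ℝ, 2 ≤ x →
      |(∑ n ∈ Finset.Icc 1 ⌊x⌋₊,
          (Nat.totient (⌊x / (n : ℝ)⌋₊ ^ j) : ℝ) / (⌊x / (n : ℝ)⌋₊ : ℝ) ^ k) -
        x * ∑' d : ℕ, (Nat.totient d : ℝ) /
          ((d : ℝ) ^ (k - (j : ℝ) + 2) * ((d : ℝ) + 1))| ≤ C * x ^ ε := by
  intro ε hε
  refine ⟨5 + 3 / ε, by positivity, fun x hx => ?_⟩
  have hx0 : (0:ℝ) < x := by linarith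
  set N := ⌊x⌋₊ with hNdef
  have hN1 : 1 ≤ N := Nat.le_floor (by exact_mod_cast (by linarith : (1:ℝ) ≤ x))
  have hNx : (N:ℝ) ≤ x := Nat.floor_le hx0.le
  have hxN : x < (N:ℝ) + 1 := Nat.lt_floor_add_one x
  have hN0 : (0:ℝ) < (N:ℝ) := by exact_mod_cast Nat.pos_of_ne_zero (by omega)
  set a : ℝ := k - (j:ℝ) + 1 with ha_def
  have ha2 : 2 ≤ a := by simp only [ha_def]; linarith
  set f : ℕ → ℝ := fun d => (Nat.totient d : ℝ) / (d:ℝ) ^ a with hf_def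
  have hf0 : f 0 = 0 := by simp [hf_def]
  have hfnn : ∀ d, 0 ≤ f d := fun d => by
    simp only [hf_def]
    positivity
  -- pointwise bound f d ≤ 1/d
  have hfle : ∀ d : ℕ, 1 ≤ d → f d ≤ 1 / (d:ℝ) := by
    intro d hd
    have hd1 : (1:ℝ) ≤ (d:ℝ) := by exact_mod_cast hd
    have hd0 : (0:ℝ) < (d:ℝ) := by linarith
    simp only [hf_def]
    rw [div_le_div_iff₀ (by positivity) hd0]
    calc (Nat.totient d : ℝ) * d ≤ (d:ℝ) * d := by
          have := Nat.totient_le d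
          have : (Nat.totient d : ℝ) ≤ (d:ℝ) := by exact_mod_cast this
          nlinarith
      _ = (d:ℝ) ^ (2:ℝ) := by
          rw [show ((2:ℝ)) = ((2:ℕ):ℝ) by norm_num, Real.rpow_natCast]; ring
      _ ≤ (d:ℝ) ^ a := Real.rpow_le_rpow_of_exponent_le hd1 ha2
      _ = 1 * (d:ℝ) ^ a := by ring
  -- the summand of the infinite series
  set u : ℕ → ℝ := fun d =>
    (Nat.totient d : ℝ) / ((d : ℝ) ^ (k - (j : ℝ) + 2) * ((d : ℝ) + 1)) with hu_def
  have hka : k - (j:ℝ) + 2 = a + 1 := by simp only [ha_def]; ring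
  have hu0 : u 0 = 0 := by simp [hu_def]
  have hunn : ∀ d, 0 ≤ u d := fun d => by
    simp only [hu_def]
    have h1 : (0:ℝ) ≤ (d:ℝ) ^ (k - (j:ℝ) + 2) := Real.rpow_nonneg (Nat.cast_nonneg d) _
    positivity
  have hule : ∀ d : ℕ, 1 ≤ d → u d ≤ 1 / ((d:ℝ) * ((d:ℝ) + 1)) := by
    intro d hd
    have hd1 : (1:ℝ) ≤ (d:ℝ) := by exact_mod_cast hd
    have hd0 : (0:ℝ) < (d:ℝ) := by linarith
    have hra : (0:ℝ) < (d:ℝ) ^ (k - (j:ℝ) + 2) := Real.rpow_pos_of_pos hd0 _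
    have htot : (Nat.totient d : ℝ) ≤ (d:ℝ) := by exact_mod_cast Nat.totient_le d
    have h2 : (d:ℝ) * (d:ℝ) ≤ (d:ℝ) ^ (k - (j:ℝ) + 2) := by
      have h2a := Real.rpow_le_rpow_of_exponent_le hd1
        (show (2:ℝ) ≤ k - (j:ℝ) + 2 by linarith)
      calc (d:ℝ) * (d:ℝ) = (d:ℝ) ^ ((2:ℕ):ℝ) := by rw [Real.rpow_natCast]; push_cast; ring
        _ = (d:ℝ) ^ (2:ℝ) := by norm_num
        _ ≤ _ := h2a
    simp only [hu_def]
    rw [div_le_div_iff₀ (by positivity) (by positivity)]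
    nlinarith [mul_le_mul_of_nonneg_right h2 (show (0:ℝ) ≤ (d:ℝ) + 1 by linarith),
      mul_le_mul_of_nonneg_right htot (show (0:ℝ) ≤ (d:ℝ) * ((d:ℝ) + 1) by positivity)]
  have husq : ∀ d : ℕ, u d ≤ 1 / (d:ℝ) ^ (2:ℕ) := by
    intro d
    rcases Nat.eq_zero_or_pos d with rfl | hd
    · simp [hu0]
    have hd1 : (1:ℝ) ≤ (d:ℝ) := by exact_mod_cast hd
    refine (hule d hd).trans ?_
    rw [div_le_div_iff₀ (by nlinarith) (by positivity)]
    push_cast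
    nlinarith
  have husum : Summable u :=
    Summable.of_nonneg_of_le hunn husq (Real.summable_one_div_nat_pow.2 (by omega))
  -- Step 1: rewrite the terms of the sum
  have hterm : ∀ n ∈ Finset.Icc 1 N,
      (Nat.totient (⌊x / (n : ℝ)⌋₊ ^ j) : ℝ) / (⌊x / (n : ℝ)⌋₊ : ℝ) ^ k
        = f ⌊x / (n : ℝ)⌋₊ := by
    intro n hn
    rw [Finset.mem_Icc] at hn
    obtain ⟨hn1, hnN⟩ := hn
    have hn0 : (0:ℝ) < (n:ℝ) := by exact_mod_cast Nat.pos_of_ne_zero (by omega)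
    have hnx : (n:ℝ) ≤ x := le_trans (by exact_mod_cast hnN) hNx
    set d := ⌊x / (n : ℝ)⌋₊ with hd_def
    have hd1 : 1 ≤ d := by
      refine Nat.le_floor ?_
      rw [Nat.cast_one, le_div_iff₀ hn0, one_mul]
      exact hnx
    have hd0 : (0:ℝ) < (d:ℝ) := by exact_mod_cast Nat.pos_of_ne_zero (by omega)
    rw [totient_pow' d j hj]
    push_cast
    have hsplit : (d:ℝ) ^ k = (d:ℝ) ^ (j - 1 : ℕ) * (d:ℝ) ^ a := by
      rw [← Real.rpow_natCast (d:ℝ) (j-1), ← Real.rpow_add hd0]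
      congr 1
      have : ((j - 1 : ℕ) : ℝ) = (j : ℝ) - 1 := by
        have := Nat.cast_sub hj (R := ℝ)
        simpa using this
      rw [this, ha_def]; ring
    rw [hsplit, mul_div_mul_left _ _ (by positivity : ((d:ℝ) ^ (j - 1 : ℕ)) ≠ 0)]
  rw [Finset.sum_congr rfl hterm, rearrange f hf0 x hx]
  -- tail of the series
  set R : ℝ := ∑' i, u (i + (N + 1)) with hR_def
  have hIccSum : ∑ i ∈ Finset.range (N+1), u i = ∑ d ∈ Finset.Icc 1 N, u d := by
    rw [Finset.sum_range_succ' u N, hu0, add_zero, ← Finset.Ico_add_one_right_eq_Icc,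
      Finset.sum_Ico_eq_sum_range]
    simp only [Nat.add_sub_cancel]
    exact Finset.sum_congr rfl fun i _ => by rw [Nat.add_comm]
  have hT : ∑' d, u d = (∑ d ∈ Finset.Icc 1 N, u d) + R := by
    rw [hR_def, ← Summable.sum_add_tsum_nat_add (N+1) husum, hIccSum]
  have hR0 : 0 ≤ R := tsum_nonneg fun i => hunn _
  have hRle : R ≤ 1 / ((N:ℝ) + 1) := by
    rw [hR_def]
    refine Real.tsum_le_of_sum_range_le (fun i => hunn _) (fun M => ?_)
    calc ∑ i ∈ Finset.range M, u (i + (N + 1))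
        ≤ ∑ i ∈ Finset.range M, (1 / ((i:ℝ) + N + 1) - 1 / (((i:ℝ) + 1) + N + 1)) := by
          refine Finset.sum_le_sum fun i _ => ?_
          have h1 := hule (i + (N + 1)) (by omega)
          have hi0 : (0:ℝ) < (i:ℝ) + N + 1 := by positivity
          have hi1 : (0:ℝ) < (i:ℝ) + N + 2 := by positivity
          have hc : ((i + (N + 1) : ℕ) : ℝ) = (i:ℝ) + N + 1 := by push_cast; ring
          rw [hc] at h1
          refine h1.trans ?_
          rw [div_sub_div _ _ (by positivity) (by positivity), div_le_div_iff₀ (by positivity) (by positivity)]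
          ring_nf
          nlinarith [hi0, hi1]
      _ = 1 / ((0:ℝ) + N + 1) - 1 / ((M:ℝ) + N + 1) := by
          have hts := Finset.sum_range_sub' (fun i : ℕ => 1 / ((i:ℝ) + N + 1)) M
          have : ∀ i ∈ Finset.range M,
              (1 / ((i:ℝ) + N + 1) - 1 / (((i:ℝ) + 1) + N + 1))
                = (fun i : ℕ => 1 / ((i:ℝ) + N + 1)) i
                  - (fun i : ℕ => 1 / ((i:ℝ) + N + 1)) (i + 1) := by
            intro i _
            simp only []
            push_cast
            ring_nf
          rw [Finset.sum_congr rfl this, hts]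
          norm_num
      _ ≤ 1 / ((N:ℝ) + 1) := by
          have : (0:ℝ) ≤ 1 / ((M:ℝ) + N + 1) := by positivity
          have h0 : 1 / ((0:ℝ) + N + 1) = 1 / ((N:ℝ) + 1) := by norm_num
          linarith [this, h0.le, h0.ge]
  -- relating the partial sum of u to f
  have hPu : ∑ d ∈ Finset.Icc 1 N, f d / ((d:ℝ) * ((d:ℝ) + 1)) = ∑ d ∈ Finset.Icc 1 N, u d := by
    refine Finset.sum_congr rfl fun d hd => ?_
    rw [Finset.mem_Icc] at hd
    have hd0 : (0:ℝ) < (d:ℝ) := by exact_mod_cast Nat.pos_of_ne_zero (by omega)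
    have hden : (d:ℝ) ^ (k - (j:ℝ) + 2) * ((d:ℝ) + 1) = (d:ℝ) ^ a * ((d:ℝ) * ((d:ℝ) + 1)) := by
      rw [hka, Real.rpow_add_one hd0.ne']
      exact mul_assoc _ _ _
    simp only [hf_def, hu_def]
    rw [div_div, hden]
  -- splitting the main sum
  have hsplit2 : ∑ d ∈ Finset.Icc 1 N, (f d - f (d - 1)) * (⌊x / (d:ℝ)⌋₊ : ℝ)
      = (∑ d ∈ Finset.Icc 1 N, (f d - f (d - 1)) * ((⌊x / (d:ℝ)⌋₊ : ℝ) - x / d))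
        + x * ∑ d ∈ Finset.Icc 1 N, (f d - f (d - 1)) / d := by
    rw [Finset.mul_sum, ← Finset.sum_add_distrib]
    refine Finset.sum_congr rfl fun d hd => ?_
    rw [Finset.mem_Icc] at hd
    have hd0 : (d:ℝ) ≠ 0 := by
      have : (0:ℝ) < (d:ℝ) := by exact_mod_cast Nat.pos_of_ne_zero (by omega)
      exact this.ne'
    field_simp
    ring
  rw [hsplit2, abel_id' f hf0 N, hPu]
  -- bound the floor-error term
  have hgb : ∀ d : ℕ, 1 ≤ d → |f d - f (d - 1)| ≤ 3 / (d:ℝ) := by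
    intro d hd
    have hd0 : (0:ℝ) < (d:ℝ) := by exact_mod_cast Nat.pos_of_ne_zero (by omega)
    rcases Nat.eq_or_lt_of_le hd with h1 | h2
    · rw [← h1]
      norm_num [hf0]
      calc |f 1| = f 1 := abs_of_nonneg (hfnn 1)
        _ ≤ 1 / (1:ℝ) := by exact_mod_cast hfle 1 le_rfl
        _ ≤ 3 := by norm_num
    · have hd2 : 2 ≤ d := h2
      have hdm1 : 1 ≤ d - 1 := by omega
      have hc : ((d - 1 : ℕ) : ℝ) = (d:ℝ) - 1 := by
        have := Nat.cast_sub (by omega : 1 ≤ d) (R := ℝ)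
        simpa using this
      have hfd := hfle d hd
      have hfd1 := hfle (d - 1) hdm1
      rw [hc] at hfd1
      have hd1R : (2:ℝ) ≤ (d:ℝ) := by exact_mod_cast hd2
      have hkey : 1 / ((d:ℝ) - 1) ≤ 2 / (d:ℝ) := by
        rw [div_le_div_iff₀ (by linarith) hd0]
        linarith
      rw [abs_le]
      constructor
      · have := hfnn d
        have h3 : f (d-1) ≤ 2 / (d:ℝ) := hfd1.trans hkey
        have h4 : 2 / (d:ℝ) ≤ 3 / (d:ℝ) := by gcongr <;> norm_num
        linarith
      · have := hfnn (d-1)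
        have h4 : 1 / (d:ℝ) ≤ 3 / (d:ℝ) := by
          rw [div_le_div_iff₀ hd0 hd0]; nlinarith
        linarith [hfd]
  have hfloor : ∀ d : ℕ, 1 ≤ d → |(⌊x / (d:ℝ)⌋₊ : ℝ) - x / d| ≤ 1 := by
    intro d hd
    have hd0 : (0:ℝ) < (d:ℝ) := by exact_mod_cast Nat.pos_of_ne_zero (by omega)
    have h1 : (⌊x / (d:ℝ)⌋₊ : ℝ) ≤ x / d := Nat.floor_le (by positivity)
    have h2 : x / d < ⌊x / (d:ℝ)⌋₊ + 1 := Nat.lt_floor_add_one _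
    rw [abs_le]
    constructor <;> linarith
  have hharm : ∑ d ∈ Finset.Icc 1 N, 1 / (d:ℝ) ≤ 1 + Real.log x := by
    have h1 : ∑ d ∈ Finset.Icc 1 N, 1 / (d:ℝ) = ((harmonic N : ℚ) : ℝ) := by
      rw [harmonic_eq_sum_Icc]
      push_cast
      simp [one_div]
    rw [h1]
    refine (harmonic_le_one_add_log N).trans ?_
    have : Real.log (N:ℝ) ≤ Real.log x := Real.log_le_log hN0 hNx
    linarith
  have hE1 : |∑ d ∈ Finset.Icc 1 N, (f d - f (d - 1)) * ((⌊x / (d:ℝ)⌋₊ : ℝ) - x / d)|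
      ≤ 3 * (1 + Real.log x) := by
    calc |∑ d ∈ Finset.Icc 1 N, (f d - f (d - 1)) * ((⌊x / (d:ℝ)⌋₊ : ℝ) - x / d)|
        ≤ ∑ d ∈ Finset.Icc 1 N, |(f d - f (d - 1)) * ((⌊x / (d:ℝ)⌋₊ : ℝ) - x / d)| :=
          Finset.abs_sum_le_sum_abs _ _
      _ ≤ ∑ d ∈ Finset.Icc 1 N, 3 / (d:ℝ) := by
          refine Finset.sum_le_sum fun d hd => ?_
          rw [Finset.mem_Icc] at hd
          rw [abs_mul]
          calc |f d - f (d - 1)| * |(⌊x / (d:ℝ)⌋₊ : ℝ) - x / d|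
              ≤ (3 / (d:ℝ)) * 1 := by
                refine mul_le_mul (hgb d hd.1) (hfloor d hd.1) (abs_nonneg _) (by positivity)
            _ = 3 / (d:ℝ) := by ring
      _ = 3 * ∑ d ∈ Finset.Icc 1 N, 1 / (d:ℝ) := by
          rw [Finset.mul_sum]
          exact Finset.sum_congr rfl fun d _ => by ring
      _ ≤ 3 * (1 + Real.log x) := by linarith [hharm]
  -- small remaining terms
  have hfNb : x * (f N / ((N:ℝ) + 1)) ≤ 1 := by
    have h1 : f N ≤ 1 / (N:ℝ) := hfle N hN1
    have h2 : (0:ℝ) ≤ f N := hfnn N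
    have h3 : x ≤ (N:ℝ) + 1 := hxN.le
    have h5 : f N / ((N:ℝ) + 1) ≤ (1 / (N:ℝ)) / ((N:ℝ) + 1) := by gcongr
    calc x * (f N / ((N:ℝ) + 1)) ≤ ((N:ℝ) + 1) * ((1 / (N:ℝ)) / ((N:ℝ) + 1)) := by
          refine mul_le_mul h3 h5 (by positivity) (by positivity)
      _ = 1 / (N:ℝ) := by field_simp
      _ ≤ 1 := by
          rw [div_le_one hN0]
          exact_mod_cast hN1
  have hfN0 : 0 ≤ x * (f N / ((N:ℝ) + 1)) := by
    have := hfnn N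
    positivity
  have hxR1 : x * R ≤ 1 := by
    calc x * R ≤ ((N:ℝ) + 1) * (1 / ((N:ℝ) + 1)) := by
          refine mul_le_mul hxN.le hRle hR0 (by positivity)
      _ = 1 := by field_simp
  have hxR0 : 0 ≤ x * R := mul_nonneg hx0.le hR0
  -- final assembly
  rw [hT]
  have key : ((∑ d ∈ Finset.Icc 1 N, (f d - f (d - 1)) * ((⌊x / (d:ℝ)⌋₊ : ℝ) - x / d))
        + x * ((∑ d ∈ Finset.Icc 1 N, u d) + f N / ((N:ℝ) + 1)))
      - x * ((∑ d ∈ Finset.Icc 1 N, u d) + R)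
      = (∑ d ∈ Finset.Icc 1 N, (f d - f (d - 1)) * ((⌊x / (d:ℝ)⌋₊ : ℝ) - x / d))
        + (x * (f N / ((N:ℝ) + 1)) - x * R) := by ring
  have hx1 : 1 ≤ x ^ ε := Real.one_le_rpow (by linarith) hε.le
  have hlog : Real.log x ≤ x ^ ε / ε := Real.log_le_rpow_div hx0.le hε
  have hsame : (3 / ε) * x ^ ε = 3 * (x ^ ε / ε) := by ring
  calc |(∑ d ∈ Finset.Icc 1 N, (f d - f (d - 1)) * ((⌊x / (d:ℝ)⌋₊ : ℝ) - x / d))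
        + x * ((∑ d ∈ Finset.Icc 1 N, u d) + f N / ((N:ℝ) + 1))
      - x * ((∑ d ∈ Finset.Icc 1 N, u d) + R)|
      = |(∑ d ∈ Finset.Icc 1 N, (f d - f (d - 1)) * ((⌊x / (d:ℝ)⌋₊ : ℝ) - x / d))
        + (x * (f N / ((N:ℝ) + 1)) - x * R)| := by rw [key]
    _ ≤ |∑ d ∈ Finset.Icc 1 N, (f d - f (d - 1)) * ((⌊x / (d:ℝ)⌋₊ : ℝ) - x / d)|
        + |x * (f N / ((N:ℝ) + 1)) - x * R| := abs_add_le _ _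
    _ ≤ 3 * (1 + Real.log x) + 1 := by
        refine add_le_add hE1 (abs_le.2 ⟨by linarith, by linarith⟩)
    _ ≤ (5 + 3 / ε) * x ^ ε := by
        have hexp : (5 + 3 / ε) * x ^ ε = 5 * x ^ ε + (3 / ε) * x ^ ε := by ring
        rw [hexp, hsame]
        have h4 : (4:ℝ) ≤ 5 * x ^ ε := by linarith
        linarith
end

section
/- For integers j, k ≥ 0 with j − k ≥ 2, one has 2ζ(j−k−1)x^{j−k−1} + O(x^{max(j−k−2, 1)}(log x)^δ) ≤ ∑_{n ≤ x} φ([x/n]^j)/[x/n]^k ≤ ζ(j−k)x^{j−k} + O(x^{j−k−1}), where δ = 1 if j − k − 2 = 0 and δ = 0 otherwise. -/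
open Finset Real

private lemma totient_pow_aux (q i : ℕ) :
    Nat.totient (q ^ (i + 1)) = q ^ i * Nat.totient q := by
  rcases Nat.eq_zero_or_pos q with rfl | hq
  · simp [zero_pow]
  · have h1 : ((Nat.totient (q ^ (i + 1)) : ℚ))
        = (q : ℚ) ^ (i + 1) * ∏ p ∈ q.primeFactors, (1 - (p : ℚ)⁻¹) := by
      rw [Nat.totient_eq_mul_prod_factors, Nat.primeFactors_pow_succ]
      push_cast
      ring
    have h2 : ((Nat.totient q : ℚ)) = (q : ℚ) * ∏ p ∈ q.primeFactors, (1 - (p : ℚ)⁻¹) :=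
      Nat.totient_eq_mul_prod_factors q
    have h3 : ((Nat.totient (q ^ (i + 1)) : ℚ)) = ((q ^ i * Nat.totient q : ℕ) : ℚ) := by
      push_cast
      rw [h1, h2]
      ring
    exact_mod_cast h3

private lemma four_le_totient {N : ℕ} (hN : 7 ≤ N) : 4 ≤ Nat.totient N := by
  by_contra hlt
  push_neg at hlt
  have heven : Even N.totient := Nat.totient_even (by omega)
  have hpos : 0 < N.totient := Nat.totient_pos.2 (by omega)
  obtain ⟨r, hr⟩ := heven
  have hφ : N.totient = 2 := by omega
  have hdvd : N ∣ 12 := by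
    rw [Nat.dvd_iff_prime_pow_dvd_dvd]
    intro p e hp hpe
    rcases Nat.eq_zero_or_pos e with rfl | he
    · simpa using one_dvd _
    have h1 : Nat.totient (p ^ e) ∣ 2 := hφ ▸ Nat.totient_dvd_of_dvd hpe
    rw [Nat.totient_prime_pow hp he] at h1
    have hp2 : 2 ≤ p := hp.two_le
    have hple : p - 1 ∣ 2 := (dvd_mul_left (p - 1) (p ^ (e - 1))).trans h1
    have hpow : p ^ (e - 1) ∣ 2 := (dvd_mul_right (p ^ (e - 1)) (p - 1)).trans h1
    have hp3 : p ≤ 3 := by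
      have := Nat.le_of_dvd (by norm_num) hple
      omega
    interval_cases p
    · -- p = 2
      have hb : 2 ^ (e - 1) ≤ 2 := Nat.le_of_dvd (by norm_num) hpow
      have he2 : e ≤ 2 := by
        by_contra hc
        push_neg at hc
        have : 2 ^ 2 ≤ 2 ^ (e - 1) := Nat.pow_le_pow_right (by norm_num) (by omega)
        omega
      exact dvd_trans (pow_dvd_pow 2 he2) (by norm_num)
    · -- p = 3
      have hb : 3 ^ (e - 1) ≤ 2 := Nat.le_of_dvd (by norm_num) hpow
      have he1 : e = 1 := by
        by_contra hc
        have h1e : 1 ≤ e - 1 := by omega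
        have : 3 ^ 1 ≤ 3 ^ (e - 1) := Nat.pow_le_pow_right (by norm_num) h1e
        simp at this
        omega
      subst he1
      norm_num
  have hN12 : N ≤ 12 := Nat.le_of_dvd (by norm_num) hdvd
  interval_cases N <;> revert hφ <;> decide

private lemma summable_aux (m : ℕ) (hm : 2 ≤ m) : Summable (fun n : ℕ => 1 / (n : ℝ) ^ m) :=
  Real.summable_one_div_nat_pow.mpr (by omega)

private lemma zeta_repr (m : ℕ) (hm : 2 ≤ m) :
    (riemannZeta ((m : ℕ) : ℂ)).re = ∑' n : ℕ, 1 / (n : ℝ) ^ m := by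
  have h1 : riemannZeta ((m : ℕ) : ℂ) = ((∑' n : ℕ, 1 / (n : ℝ) ^ m : ℝ) : ℂ) := by
    rw [zeta_nat_eq_tsum_of_gt_one (by omega : 1 < m), Complex.ofReal_tsum]
    exact tsum_congr fun n => by push_cast; ring
  rw [h1, Complex.ofReal_re]

private lemma zeta_partial_le (m : ℕ) (hm : 2 ≤ m) (N : ℕ) :
    ∑ n ∈ Icc 1 N, 1 / (n : ℝ) ^ m ≤ (riemannZeta ((m : ℕ) : ℂ)).re := by
  rw [zeta_repr m hm]
  exact Summable.sum_le_tsum _ (fun i _ => by positivity) (summable_aux m hm)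

private lemma zeta_le_two (m : ℕ) (hm : 2 ≤ m) : (riemannZeta ((m : ℕ) : ℂ)).re ≤ 2 := by
  have h2 : (riemannZeta ((2 : ℕ) : ℂ)).re = π ^ 2 / 6 := by
    have hc : ((2 : ℕ) : ℂ) = (2 : ℂ) := by norm_num
    rw [hc, riemannZeta_two, show ((π : ℂ)) ^ 2 / 6 = ((π ^ 2 / 6 : ℝ) : ℂ) by push_cast; ring,
      Complex.ofReal_re]
  have hle : (riemannZeta ((m : ℕ) : ℂ)).re ≤ (riemannZeta ((2 : ℕ) : ℂ)).re := by
    rw [zeta_repr m hm, zeta_repr 2 le_rfl]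
    refine Summable.tsum_le_tsum (fun n => ?_) (summable_aux m hm) (summable_aux 2 le_rfl)
    rcases Nat.eq_zero_or_pos n with rfl | hn
    · rw [Nat.cast_zero, zero_pow (by omega : m ≠ 0), zero_pow (by norm_num : (2:ℕ) ≠ 0)]
    · have h1n : (1 : ℝ) ≤ (n : ℝ) := by exact_mod_cast hn
      apply one_div_le_one_div_of_le (by positivity)
      exact pow_le_pow_right₀ h1n hm
  have hpi : π < 3.15 := by
    calc π < 3.1416 := Real.pi_lt_d4
      _ < 3.15 := by norm_num
  have hpi0 := Real.pi_pos
  have hpi2 : π ^ 2 ≤ 10 := by nlinarith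
  calc (riemannZeta ((m : ℕ) : ℂ)).re ≤ π ^ 2 / 6 := h2 ▸ hle
    _ ≤ 2 := by linarith

private lemma pow_sub_one_le (x : ℝ) (hx : 1 ≤ x) (a : ℕ) :
    x ^ (a + 1) - ((a : ℝ) + 1) * x ^ a ≤ (x - 1) ^ (a + 1) := by
  have key := geom_sum₂_mul x (x - 1) (a + 1)
  have hsimp : x - (x - 1) = 1 := by ring
  rw [hsimp, mul_one] at key
  have hb : ∑ i ∈ range (a + 1), x ^ i * (x - 1) ^ (a + 1 - 1 - i) ≤ ((a : ℝ) + 1) * x ^ a := by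
    have : ∀ i ∈ range (a + 1), x ^ i * (x - 1) ^ (a + 1 - 1 - i) ≤ x ^ a := by
      intro i hi
      simp only [mem_range] at hi
      calc x ^ i * (x - 1) ^ (a + 1 - 1 - i) ≤ x ^ i * x ^ (a + 1 - 1 - i) := by
            apply mul_le_mul_of_nonneg_left
              (pow_le_pow_left₀ (by linarith) (by linarith) _) (by positivity)
        _ = x ^ a := by rw [← pow_add]; congr 1; omega
    calc ∑ i ∈ range (a + 1), x ^ i * (x - 1) ^ (a + 1 - 1 - i)
        ≤ ∑ _i ∈ range (a + 1), x ^ a := Finset.sum_le_sum this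
      _ = ((a : ℝ) + 1) * x ^ a := by
          rw [Finset.sum_const, Finset.card_range]
          push_cast
          ring
  linarith [key, hb]

/-- For integers `j, k ≥ 0` with `j - k ≥ 2`,
`2ζ(j-k-1)x^{j-k-1} + O(x^{max(j-k-2,1)}(log x)^δ) ≤ ∑_{n ≤ x} φ([x/n]^j)/[x/n]^k
  ≤ ζ(j-k)x^{j-k} + O(x^{j-k-1})`,
where `δ = 1` if `j - k - 2 = 0` and `δ = 0` otherwise. -/
theorem stmt_2 (j k : ℕ) (h : k + 2 ≤ j) :
    ∃ C : ℝ, 0 < C ∧ ∀ x : ℝ, 2 ≤ x →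
      (2 * (riemannZeta ((j - k - 1 : ℕ) : ℂ)).re * x ^ (j - k - 1) -
          C * x ^ (max (j - k - 2) 1) *
            (Real.log x) ^ (if j - k - 2 = 0 then (1 : ℕ) else 0) ≤
        ∑ n ∈ Finset.Icc 1 ⌊x⌋₊,
          (Nat.totient (⌊x / (n : ℝ)⌋₊ ^ j) : ℝ) / (⌊x / (n : ℝ)⌋₊ : ℝ) ^ k) ∧
      (∑ n ∈ Finset.Icc 1 ⌊x⌋₊,
          (Nat.totient (⌊x / (n : ℝ)⌋₊ ^ j) : ℝ) / (⌊x / (n : ℝ)⌋₊ : ℝ) ^ k ≤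
        (riemannZeta ((j - k : ℕ) : ℂ)).re * x ^ (j - k) + C * x ^ (j - k - 1)) := by
  obtain ⟨d, rfl⟩ : ∃ d, j = k + 2 + d := ⟨j - (k + 2), by omega⟩
  have e3 : k + 2 + d - k = d + 2 := by omega
  have e4 : d + 2 - 1 = d + 1 := by omega
  have e5 : d + 2 - 2 = d := by omega
  simp only [e3, e4, e5]
  have hlog2 : (0 : ℝ) < Real.log 2 := Real.log_pos (by norm_num)
  refine ⟨28 + 4 * ((d : ℝ) + 1) + (2 * |(riemannZeta ((d + 1 : ℕ) : ℂ)).re| + 1) / Real.log 2, by positivity, ?_⟩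
  intro x hx
  have hx0 : (0 : ℝ) < x := by linarith
  have hx1 : (1 : ℝ) ≤ x := by linarith
  set N := ⌊x⌋₊ with hNdef
  have hN2 : 2 ≤ N := Nat.le_floor (by exact_mod_cast hx)
  have hNx : (N : ℝ) ≤ x := Nat.floor_le hx0.le
  have hxN : x < (N : ℝ) + 1 := Nat.lt_floor_add_one x
  -- rewrite each term
  have hterm : ∀ n ∈ Icc 1 N,
      (Nat.totient (⌊x / (n : ℝ)⌋₊ ^ (k + 2 + d)) : ℝ) / (⌊x / (n : ℝ)⌋₊ : ℝ) ^ k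
        = (Nat.totient ⌊x / (n : ℝ)⌋₊ : ℝ) * (⌊x / (n : ℝ)⌋₊ : ℝ) ^ (d + 1) := by
    intro n hn
    simp only [mem_Icc] at hn
    have hn1 : (1 : ℝ) ≤ (n : ℝ) := by exact_mod_cast hn.1
    have hn0 : (0 : ℝ) < (n : ℝ) := by linarith
    have hnN : (n : ℝ) ≤ x := le_trans (by exact_mod_cast hn.2) hNx
    have hq1 : 1 ≤ ⌊x / (n : ℝ)⌋₊ := by
      apply Nat.le_floor
      rw [Nat.cast_one, le_div_iff₀ hn0]
      linarith
    set q := ⌊x / (n : ℝ)⌋₊ with hq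
    have hq0 : ((q : ℝ)) ≠ 0 := by
      have : (1 : ℝ) ≤ (q : ℝ) := by exact_mod_cast hq1
      linarith
    have htot : Nat.totient (q ^ (k + 2 + d)) = q ^ (k + 1 + d) * Nat.totient q := by
      have h' := totient_pow_aux q (k + 1 + d)
      rw [show k + 1 + d + 1 = k + 2 + d by omega] at h'
      exact h'
    rw [htot]
    push_cast
    rw [show (q : ℝ) ^ (k + 1 + d) = (q : ℝ) ^ k * (q : ℝ) ^ (d + 1) by
      rw [← pow_add]; congr 1; omega]
    field_simp
  have hsumeq : ∑ n ∈ Icc 1 N,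
      (Nat.totient (⌊x / (n : ℝ)⌋₊ ^ (k + 2 + d)) : ℝ) / (⌊x / (n : ℝ)⌋₊ : ℝ) ^ k
      = ∑ n ∈ Icc 1 N,
      (Nat.totient ⌊x / (n : ℝ)⌋₊ : ℝ) * (⌊x / (n : ℝ)⌋₊ : ℝ) ^ (d + 1) :=
    Finset.sum_congr rfl hterm
  have hsum0 : (0 : ℝ) ≤ ∑ n ∈ Icc 1 N,
      (Nat.totient ⌊x / (n : ℝ)⌋₊ : ℝ) * (⌊x / (n : ℝ)⌋₊ : ℝ) ^ (d + 1) :=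
    Finset.sum_nonneg fun n _ => by positivity
  constructor
  · -- lower bound
    rw [hsumeq]
    rcases Nat.eq_zero_or_pos d with rfl | hd1
    · -- d = 0 : trivial case
      norm_num
      simp only [zero_add, pow_one] at hsum0
      set a : ℝ := (riemannZeta (1 : ℂ)).re with ha
      have hlog : Real.log 2 ≤ Real.log x := Real.log_le_log (by norm_num) hx
      have habs : 2 * a * x ≤ 2 * |a| * x := by
        have := le_abs_self a
        nlinarith
      have hkey : (2 * |a| + 1) * x ≤ (32 + (2 * |a| + 1) / Real.log 2) * x * Real.log x := by
        have h1 : (2 * |a| + 1) * x = (2 * |a| + 1) / Real.log 2 * x * Real.log 2 := by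
          field_simp
        rw [h1]
        apply mul_le_mul ?_ hlog hlog2.le ?_
        · apply mul_le_mul_of_nonneg_right ?_ hx0.le
          have h0 : (0:ℝ) ≤ |a| := abs_nonneg a
          have h0' : (0:ℝ) ≤ (2 * |a| + 1) / Real.log 2 := by positivity
          linarith
        · positivity
      linarith [hsum0, habs, hkey, hx0]
    · -- d ≥ 1 : main case
      rw [if_neg (by omega : ¬ d = 0), pow_zero, mul_one, max_eq_left hd1]
      set Z1 : ℝ := (riemannZeta ((d + 1 : ℕ) : ℂ)).re with hZ1
      have hZle : Z1 ≤ 2 := zeta_le_two (d + 1) (by omega)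
      set C := 28 + 4 * ((d : ℝ) + 1) + (2 * |Z1| + 1) / Real.log 2 with hC
      have h0C : (0:ℝ) ≤ (2 * |Z1| + 1) / Real.log 2 := by positivity
      have hd0R : (0:ℝ) ≤ (d : ℝ) := Nat.cast_nonneg d
      have hC4 : 4 * ((d : ℝ) + 1) ≤ C := by rw [hC]; linarith
      have hC28 : 28 ≤ C := by rw [hC]; linarith
      rcases le_or_gt 7 x with hx7 | hx7
      · have hN7 : 7 ≤ N := Nat.le_floor (by exact_mod_cast hx7)
        have hphi4 : (4 : ℝ) ≤ (Nat.totient N : ℝ) := by exact_mod_cast four_le_totient hN7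
        have h1mem : (1 : ℕ) ∈ Icc 1 N := mem_Icc.mpr ⟨le_rfl, by omega⟩
        have hsingle := Finset.single_le_sum
          (f := fun n : ℕ => (Nat.totient ⌊x / (n : ℝ)⌋₊ : ℝ) * (⌊x / (n : ℝ)⌋₊ : ℝ) ^ (d + 1))
          (fun n _ => by positivity) h1mem
        simp only [Nat.cast_one, div_one] at hsingle
        rw [← hNdef] at hsingle
        have hx1N : x - 1 ≤ (N : ℝ) := by linarith
        have hpow1 : (x - 1) ^ (d + 1) ≤ (N : ℝ) ^ (d + 1) :=
          pow_le_pow_left₀ (by linarith) hx1N _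
        have hmain : 4 * (x - 1) ^ (d + 1) ≤ (Nat.totient N : ℝ) * (N : ℝ) ^ (d + 1) :=
          mul_le_mul hphi4 hpow1 (pow_nonneg (by linarith) _) (by positivity)
        have hbin := pow_sub_one_le x hx1 d
        have hZ4 : 2 * Z1 * x ^ (d + 1) ≤ 4 * x ^ (d + 1) :=
          mul_le_mul_of_nonneg_right (by linarith) (by positivity)
        have hCx : 4 * ((d : ℝ) + 1) * x ^ d ≤ C * x ^ d :=
          mul_le_mul_of_nonneg_right hC4 (by positivity)
        clear_value N Z1 C
        linarith [hsingle, hmain, hbin, hZ4, hCx]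
      · have h1 : 2 * Z1 * x ^ (d + 1) ≤ 4 * x ^ (d + 1) :=
          mul_le_mul_of_nonneg_right (by linarith) (by positivity)
        have h3 : 4 * (x ^ d * x) ≤ 28 * x ^ d := by
          nlinarith [pow_nonneg hx0.le d]
        have h4 : 28 * x ^ d ≤ C * x ^ d :=
          mul_le_mul_of_nonneg_right hC28 (by positivity)
        have hZx : 2 * Z1 * x ^ (d + 1) ≤ C * x ^ d := by
          calc 2 * Z1 * x ^ (d + 1) ≤ 4 * x ^ (d + 1) := h1
            _ = 4 * (x ^ d * x) := by rw [pow_succ]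
            _ ≤ 28 * x ^ d := h3
            _ ≤ C * x ^ d := h4
        exact le_trans (sub_nonpos.mpr hZx) hsum0
  · -- upper bound
    rw [hsumeq]
    have hub : ∑ n ∈ Icc 1 N,
        (Nat.totient ⌊x / (n : ℝ)⌋₊ : ℝ) * (⌊x / (n : ℝ)⌋₊ : ℝ) ^ (d + 1)
        ≤ (riemannZeta ((d + 2 : ℕ) : ℂ)).re * x ^ (d + 2) := by
      have step : ∀ n ∈ Icc 1 N,
          (Nat.totient ⌊x / (n : ℝ)⌋₊ : ℝ) * (⌊x / (n : ℝ)⌋₊ : ℝ) ^ (d + 1)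
            ≤ x ^ (d + 2) * (1 / (n : ℝ) ^ (d + 2)) := by
        intro n hn
        simp only [mem_Icc] at hn
        have hn1 : (1 : ℝ) ≤ (n : ℝ) := by exact_mod_cast hn.1
        have hn0 : (0 : ℝ) < (n : ℝ) := by linarith
        set q := ⌊x / (n : ℝ)⌋₊ with hq
        have hqle : (q : ℝ) ≤ x / (n : ℝ) := Nat.floor_le (by positivity)
        have h1 : (Nat.totient q : ℝ) ≤ (q : ℝ) := by exact_mod_cast Nat.totient_le q
        calc (Nat.totient q : ℝ) * (q : ℝ) ^ (d + 1)
            ≤ (q : ℝ) * (q : ℝ) ^ (d + 1) := by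
              apply mul_le_mul_of_nonneg_right h1 (by positivity)
          _ = (q : ℝ) ^ (d + 2) := by rw [← pow_succ']
          _ ≤ (x / (n : ℝ)) ^ (d + 2) := pow_le_pow_left₀ (by positivity) hqle _
          _ = x ^ (d + 2) * (1 / (n : ℝ) ^ (d + 2)) := by
              rw [div_pow]; ring
      calc ∑ n ∈ Icc 1 N,
          (Nat.totient ⌊x / (n : ℝ)⌋₊ : ℝ) * (⌊x / (n : ℝ)⌋₊ : ℝ) ^ (d + 1)
          ≤ ∑ n ∈ Icc 1 N, x ^ (d + 2) * (1 / (n : ℝ) ^ (d + 2)) :=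
            Finset.sum_le_sum step
        _ = x ^ (d + 2) * ∑ n ∈ Icc 1 N, 1 / (n : ℝ) ^ (d + 2) := by rw [mul_sum]
        _ ≤ x ^ (d + 2) * (riemannZeta ((d + 2 : ℕ) : ℂ)).re := by
            apply mul_le_mul_of_nonneg_left (zeta_partial_le (d + 2) (by omega) N)
              (by positivity)
        _ = (riemannZeta ((d + 2 : ℕ) : ℂ)).re * x ^ (d + 2) := mul_comm _ _
    have hC0 : (0 : ℝ) ≤ (28 + 4 * ((d : ℝ) + 1) +
        (2 * |(riemannZeta ((d + 1 : ℕ) : ℂ)).re| + 1) / Real.log 2) * x ^ (d + 1) := by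
      positivity
    linarith
end

section
/- Let ψ(t) = {t} − 1/2 where {t} is the fractional part of t, and for fixed x ≥ 2 define F(t) = (1/t)·ψ(x/t). Then the total variation of F on any interval [z₁, z₂] with 2 ≤ z₁ < z₂ ≤ x satisfies V_F[z₁, z₂] ≪ x/z₁² + 1/z₁, with an absolute implied constant. -/
open Set Real

private lemma my_eVar_add_le (f g : ℝ → ℝ) (s : Set ℝ) :
    eVariationOn (fun t => f t + g t) s ≤ eVariationOn f s + eVariationOn g s := by
  apply iSup_le
  rintro ⟨n, u, hu, us⟩
  calc ∑ i ∈ Finset.range n, edist (f (u (i+1)) + g (u (i+1))) (f (u i) + g (u i))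
      ≤ ∑ i ∈ Finset.range n,
        (edist (f (u (i+1))) (f (u i)) + edist (g (u (i+1))) (g (u i))) := by
        exact Finset.sum_le_sum fun i _ => edist_add_add_le _ _ _ _
    _ = (∑ i ∈ Finset.range n, edist (f (u (i+1))) (f (u i)))
        + ∑ i ∈ Finset.range n, edist (g (u (i+1))) (g (u i)) := Finset.sum_add_distrib
    _ ≤ eVariationOn f s + eVariationOn g s :=
        add_le_add (eVariationOn.sum_le (f := f) (n := n) hu us) (eVariationOn.sum_le (f := g) (n := n) hu us)

private lemma my_eVar_neg (f : ℝ → ℝ) (s : Set ℝ) :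
    eVariationOn (fun t => -(f t)) s = eVariationOn f s := by
  dsimp only [eVariationOn]
  congr 1 with p : 1
  congr 1 with i : 1
  exact edist_neg_neg _ _

private lemma my_antitone_eVar {f : ℝ → ℝ} {z₁ z₂ : ℝ} (h : AntitoneOn f (Icc z₁ z₂))
    (hz : z₁ ≤ z₂) : eVariationOn f (Icc z₁ z₂) ≤ ENNReal.ofReal (f z₁ - f z₂) := by
  rw [← my_eVar_neg]
  have hm : MonotoneOn (fun t => -(f t)) (Icc z₁ z₂) := fun a ha b hb hab => by
    simpa using h ha hb hab
  have := hm.eVariationOn_le (a := z₁) (b := z₂)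
      (left_mem_Icc.2 hz) (right_mem_Icc.2 hz)
  rw [Set.inter_self] at this
  refine le_trans this (le_of_eq (congrArg ENNReal.ofReal ?_))
  show -(f z₂) - -(f z₁) = f z₁ - f z₂
  ring

private lemma my_monotone_eVar {f : ℝ → ℝ} {z₁ z₂ : ℝ} (h : MonotoneOn f (Icc z₁ z₂))
    (hz : z₁ ≤ z₂) : eVariationOn f (Icc z₁ z₂) ≤ ENNReal.ofReal (f z₂ - f z₁) := by
  have := h.eVariationOn_le (a := z₁) (b := z₂) (left_mem_Icc.2 hz) (right_mem_Icc.2 hz)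
  rwa [Set.inter_self] at this

/-- With `ψ(t) = {t} - 1/2` and `F(t) = (1/t)·ψ(x/t)`, the total variation of `F`
on `[z₁, z₂]` with `2 ≤ z₁ < z₂ ≤ x` is `≪ x/z₁² + 1/z₁`, absolutely uniformly. -/
theorem stmt_4 :
    ∃ C : ℝ, 0 < C ∧ ∀ x : ℝ, 2 ≤ x → ∀ z₁ z₂ : ℝ, 2 ≤ z₁ → z₁ < z₂ → z₂ ≤ x →
      eVariationOn (fun t : ℝ => (1 / t) * (Int.fract (x / t) - 1 / 2))
          (Set.Icc z₁ z₂) ≤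
        ENNReal.ofReal (C * (x / z₁ ^ 2 + 1 / z₁)) := by
  refine ⟨2, by norm_num, ?_⟩
  intro x hx z₁ z₂ hz₁ hz hz₂
  have hz₁0 : (0:ℝ) < z₁ := by linarith
  have hz₂0 : (0:ℝ) < z₂ := by linarith
  have hx0 : (0:ℝ) < x := by linarith
  set f₁ : ℝ → ℝ := fun t => x / t ^ 2 with hf₁
  set f₂ : ℝ → ℝ := fun t => -(1 / (2 * t)) with hf₂
  set g : ℝ → ℝ := fun t => (⌊x / t⌋ : ℝ) / t with hg
  -- pointwise identity on Icc
  have heq : Set.EqOn (fun t : ℝ => (1 / t) * (Int.fract (x / t) - 1 / 2))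
      (fun t => f₁ t + (f₂ t + -(g t))) (Icc z₁ z₂) := by
    intro t ht
    have ht0 : (0:ℝ) < t := lt_of_lt_of_le hz₁0 ht.1
    simp only [hf₁, hf₂, hg, Int.fract]
    field_simp
    ring
  rw [eVariationOn.eq_of_eqOn heq]
  -- monotonicity facts
  have hpos : ∀ t ∈ Icc z₁ z₂, (0:ℝ) < t := fun t ht => lt_of_lt_of_le hz₁0 ht.1
  have hf₁anti : AntitoneOn f₁ (Icc z₁ z₂) := by
    intro a ha b hb hab
    have ha0 := hpos a ha
    have hb0 := hpos b hb
    exact div_le_div_of_nonneg_left hx0.le (by positivity) (by nlinarith)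
  have hf₂mono : MonotoneOn f₂ (Icc z₁ z₂) := by
    intro a ha b hb hab
    have ha0 := hpos a ha
    have hb0 := hpos b hb
    simp only [hf₂, neg_le_neg_iff]
    exact div_le_div_of_nonneg_left (by norm_num) (by positivity) (by linarith)
  have hganti : AntitoneOn g (Icc z₁ z₂) := by
    intro a ha b hb hab
    have ha0 := hpos a ha
    have hb0 := hpos b hb
    have h1 : (⌊x / b⌋ : ℝ) ≤ (⌊x / a⌋ : ℝ) := by
      exact_mod_cast Int.floor_le_floor (div_le_div_of_nonneg_left hx0.le ha0 hab)
    have h2 : (0:ℝ) ≤ (⌊x / b⌋ : ℝ) := by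
      have : (0:ℝ) ≤ x / b := by positivity
      exact_mod_cast Int.floor_nonneg.2 this
    have h3 : 1 / b ≤ 1 / a := div_le_div_of_nonneg_left (by norm_num) ha0 hab
    calc g b = (⌊x / b⌋ : ℝ) * (1 / b) := by rw [hg]; ring
      _ ≤ (⌊x / a⌋ : ℝ) * (1 / a) := by
          apply mul_le_mul h1 h3 (by positivity) (le_trans h2 h1)
      _ = g a := by rw [hg]; ring
  have hnegg : MonotoneOn (fun t => -(g t)) (Icc z₁ z₂) := fun a ha b hb hab => by
    simpa using hganti ha hb hab
  -- variation bounds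
  have V1 := my_antitone_eVar hf₁anti hz.le
  have V2 := my_monotone_eVar hf₂mono hz.le
  have V3 := my_monotone_eVar hnegg hz.le
  calc eVariationOn (fun t => f₁ t + (f₂ t + -(g t))) (Icc z₁ z₂)
      ≤ eVariationOn f₁ (Icc z₁ z₂) + eVariationOn (fun t => f₂ t + -(g t)) (Icc z₁ z₂) :=
        my_eVar_add_le _ _ _
    _ ≤ eVariationOn f₁ (Icc z₁ z₂) +
        (eVariationOn f₂ (Icc z₁ z₂) + eVariationOn (fun t => -(g t)) (Icc z₁ z₂)) :=
        add_le_add_right (my_eVar_add_le _ _ _) _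
    _ ≤ ENNReal.ofReal (f₁ z₁ - f₁ z₂) +
        (ENNReal.ofReal (f₂ z₂ - f₂ z₁) + ENNReal.ofReal (-(g z₂) - -(g z₁))) :=
        add_le_add V1 (add_le_add V2 V3)
    _ ≤ ENNReal.ofReal (x / z₁ ^ 2) +
        (ENNReal.ofReal (1 / z₁) + ENNReal.ofReal (x / z₁ ^ 2)) := by
        have hg1 : g z₁ ≤ x / z₁ ^ 2 := by
          have h := Int.floor_le (x / z₁)
          have h' : (⌊x / z₁⌋ : ℝ) / z₁ ≤ (x / z₁) / z₁ := by gcongr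
          calc g z₁ = (⌊x / z₁⌋ : ℝ) / z₁ := rfl
            _ ≤ (x / z₁) / z₁ := h'
            _ = x / z₁ ^ 2 := by rw [div_div, sq]
        have hg2 : (0:ℝ) ≤ g z₂ := by
          have h0 : (0:ℝ) ≤ x / z₂ := by positivity
          have h1 : (0:ℝ) ≤ (⌊x / z₂⌋ : ℝ) := by exact_mod_cast Int.floor_nonneg.2 h0
          exact div_nonneg h1 hz₂0.le
        have e1 : f₁ z₁ - f₁ z₂ ≤ x / z₁ ^ 2 := by
          have : (0:ℝ) ≤ x / z₂ ^ 2 := by positivity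
          simp only [hf₁]; linarith
        have e2 : f₂ z₂ - f₂ z₁ ≤ 1 / z₁ := by
          have h1 : (0:ℝ) ≤ 1 / (2 * z₂) := by positivity
          have h2 : 1 / (2 * z₁) ≤ 1 / z₁ := by
            rw [div_le_div_iff₀ (by positivity) hz₁0]; linarith
          simp only [hf₂]; linarith
        have e3 : -(g z₂) - -(g z₁) ≤ x / z₁ ^ 2 := by linarith
        exact add_le_add (ENNReal.ofReal_le_ofReal e1)
          (add_le_add (ENNReal.ofReal_le_ofReal e2) (ENNReal.ofReal_le_ofReal e3))
    _ ≤ ENNReal.ofReal (2 * (x / z₁ ^ 2 + 1 / z₁)) := by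
        rw [← ENNReal.ofReal_add (by positivity) (by positivity),
          ← ENNReal.ofReal_add (by positivity) (by positivity)]
        apply ENNReal.ofReal_le_ofReal
        have : (0:ℝ) ≤ 1 / z₁ := by positivity
        linarith
end

section
/- Let u, v be arithmetic functions and U(x) = ∑_{n ≤ x} u(n). Then ∑_{n ≤ x} u(n)·v([x/n]) = ∑_{n ≤ √x} [ v(n)·(U([x/n]) − U([x/(n+1)])) + u(n)·v([x/n]) ] − ε(x), where ε(x) = u([√x])·v([x/[√x]]) if x < [√x]([√x]+1) and ε(x) = 0 otherwise. -/
open Finset Real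

lemma billal_nat (u v : ℕ → ℂ) (N : ℕ) (hN : 1 ≤ N) :
    ∑ n ∈ Icc 1 N, u n * v (N / n) =
      (∑ n ∈ Icc 1 N.sqrt,
        (v n * ((∑ k ∈ Icc 1 (N / n), u k) - ∑ k ∈ Icc 1 (N / (n + 1)), u k) +
          u n * v (N / n))) -
      (if N < N.sqrt * (N.sqrt + 1) then u N.sqrt * v (N / N.sqrt) else 0) := by
  set s := N.sqrt with hs
  have hs1 : 1 ≤ s := Nat.sqrt_pos.mpr hN
  have hsqle : s * s ≤ N := Nat.sqrt_le N
  have hsqlt : N < (s + 1) * (s + 1) := Nat.lt_succ_sqrt N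
  -- key characterization of the fibers of n ↦ N / n
  have key : ∀ n q : ℕ, 0 < n → 0 < q → (N / n = q ↔ (N / (q + 1) < n ∧ n ≤ N / q)) := by
    intro n q hn hq
    have h1 : n ≤ N / q ↔ q ≤ N / n := by
      rw [Nat.le_div_iff_mul_le hq, Nat.le_div_iff_mul_le hn, mul_comm]
    have h2 : n ≤ N / (q + 1) ↔ q + 1 ≤ N / n := by
      rw [Nat.le_div_iff_mul_le (by omega), Nat.le_div_iff_mul_le hn, mul_comm]
    omega
  -- split the LHS
  have hsplit := Finset.sum_filter_add_sum_filter_not (Icc 1 N)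
    (fun n => N / n ≤ s) (fun n => u n * v (N / n))
  set A := (Icc 1 N).filter (fun n => N / n ≤ s) with hA
  set B := (Icc 1 N).filter (fun n => ¬ N / n ≤ s) with hB
  -- B is an initial interval
  have hBeq : B = Icc 1 (N / (s + 1)) := by
    ext n
    simp only [hB, mem_filter, mem_Icc, not_le]
    constructor
    · rintro ⟨⟨h1, h2⟩, h3⟩
      refine ⟨h1, ?_⟩
      rw [Nat.le_div_iff_mul_le (by omega)]
      calc n * (s + 1) ≤ n * (N / n) := by
            exact Nat.mul_le_mul_left n h3
        _ ≤ N := Nat.mul_div_le N n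
    · rintro ⟨h1, h2⟩
      have hn : 0 < n := h1
      have h3 : n * (s + 1) ≤ N := (Nat.le_div_iff_mul_le (by omega)).mp h2
      have h4 : s + 1 ≤ N / n := by
        rw [Nat.le_div_iff_mul_le hn, mul_comm]; exact h3
      have hnN : n ≤ N := le_trans (Nat.le_mul_of_pos_right n (by omega)) h3
      exact ⟨⟨h1, hnN⟩, by omega⟩
  -- A fiberwise
  have hmaps : ∀ n ∈ A, N / n ∈ Icc 1 s := by
    intro n hn
    simp only [hA, mem_filter, mem_Icc] at hn ⊢
    obtain ⟨⟨h1, h2⟩, h3⟩ := hn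
    exact ⟨(Nat.le_div_iff_mul_le h1).mpr (by omega), h3⟩
  have hAsum : ∑ q ∈ Icc 1 s, ∑ n ∈ A.filter (fun n => N / n = q), u n * v (N / n)
      = ∑ n ∈ A, u n * v (N / n) :=
    Finset.sum_fiberwise_of_maps_to hmaps _
  have hfiber : ∀ q ∈ Icc 1 s, A.filter (fun n => N / n = q) = Ioc (N / (q + 1)) (N / q) := by
    intro q hq
    simp only [mem_Icc] at hq
    ext n
    simp only [hA, mem_filter, mem_Ioc, mem_Icc]
    constructor
    · rintro ⟨⟨⟨h1, h2⟩, h3⟩, h4⟩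
      exact (key n q h1 (by omega)).mp h4
    · rintro ⟨h1, h2⟩
      have hn : 0 < n := lt_of_le_of_lt (Nat.zero_le _) h1
      have h4 : N / n = q := (key n q hn (by omega)).mpr ⟨h1, h2⟩
      have hnN : n ≤ N := le_trans h2 (Nat.div_le_self N q)
      exact ⟨⟨⟨hn, hnN⟩, by omega⟩, h4⟩
  -- compute the v-sum
  have hvsum : ∑ q ∈ Icc 1 s,
      (v q * ((∑ k ∈ Icc 1 (N / q), u k) - ∑ k ∈ Icc 1 (N / (q + 1)), u k))
      = ∑ n ∈ A, u n * v (N / n) := by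
    rw [← hAsum]
    apply Finset.sum_congr rfl
    intro q hq
    rw [hfiber q hq]
    simp only [mem_Icc] at hq
    have hdiv : N / (q + 1) ≤ N / q := Nat.div_le_div_left (by omega) hq.1
    have hIcc : ∀ m : ℕ, Icc 1 m = Ioc 0 m := by
      intro m; ext k; simp [mem_Icc, mem_Ioc]; omega
    have hcons := Finset.sum_Ioc_consecutive u (Nat.zero_le (N / (q + 1))) hdiv
    rw [hIcc, hIcc, ← hcons]
    have : ∀ n ∈ Ioc (N / (q + 1)) (N / q), u n * v (N / n) = u n * v q := by
      intro n hn
      simp only [mem_Ioc] at hn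
      have hq1 : 0 < q := hq.1
      have hn0 : 0 < n := lt_of_le_of_lt (Nat.zero_le (N / (q + 1))) hn.1
      have : N / n = q := (key n q hn0 hq1).mpr hn
      rw [this]
    rw [Finset.sum_congr rfl this, ← Finset.sum_mul]
    ring
  -- now case split
  rw [Finset.sum_add_distrib]
  by_cases hc : N < s * (s + 1)
  · have hdiv1 : N / (s + 1) = s - 1 := by
      obtain ⟨t, ht⟩ : ∃ t, s = t + 1 := ⟨s - 1, by omega⟩
      rw [ht] at hc hsqle ⊢
      simp only [Nat.add_sub_cancel]
      have h1 : N / (t + 1 + 1) < t + 1 := by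
        rw [Nat.div_lt_iff_lt_mul (by omega)]
        exact hc
      have h2 : t ≤ N / (t + 1 + 1) := by
        rw [Nat.le_div_iff_mul_le (by omega)]
        nlinarith
      omega
    have hIccsplit : Icc 1 s = insert s (Icc 1 (s - 1)) := by
      ext k; simp [mem_Icc, mem_insert]; omega
    rw [if_pos hc, hsplit.symm, hvsum, hBeq, hdiv1]
    rw [hIccsplit, Finset.sum_insert (by simp [mem_Icc]; omega)]
    ring
  · have hdiv1 : N / (s + 1) = s := by
      have h1 : N / (s + 1) < s + 1 := by
        rw [Nat.div_lt_iff_lt_mul (by omega)]; exact hsqlt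
      have h2 : s ≤ N / (s + 1) := by
        rw [Nat.le_div_iff_mul_le (by omega)]; exact Nat.le_of_not_lt hc
      omega
    rw [if_neg hc, hsplit.symm, hvsum, hBeq, hdiv1]
    ring

/-- Billal's identity, second form:
`∑_{n ≤ x} u(n)v([x/n]) = ∑_{n ≤ √x} [v(n)(U([x/n]) - U([x/(n+1)])) + u(n)v([x/n])] - ε(x)`,
where `ε(x) = u([√x])·v([x/[√x]])` if `x < [√x]([√x]+1)` and `0` otherwise. -/
theorem stmt_6 (u v : ℕ → ℂ) (U : ℕ → ℂ)
    (hU : ∀ m : ℕ, U m = ∑ n ∈ Finset.Icc 1 m, u n)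
    (x : ℝ) (hx : 1 ≤ x) :
    ∑ n ∈ Finset.Icc 1 ⌊x⌋₊, u n * v ⌊x / (n : ℝ)⌋₊ =
      (∑ n ∈ Finset.Icc 1 ⌊Real.sqrt x⌋₊,
        (v n * (U ⌊x / (n : ℝ)⌋₊ - U ⌊x / ((n : ℝ) + 1)⌋₊) +
          u n * v ⌊x / (n : ℝ)⌋₊)) -
      (if x < (⌊Real.sqrt x⌋₊ : ℝ) * ((⌊Real.sqrt x⌋₊ : ℝ) + 1) then
        u ⌊Real.sqrt x⌋₊ * v ⌊x / (⌊Real.sqrt x⌋₊ : ℝ)⌋₊ else 0) := by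
  have hx0 : (0 : ℝ) ≤ x := le_trans zero_le_one hx
  have hN : 1 ≤ ⌊x⌋₊ := Nat.le_floor (by exact_mod_cast hx)
  set N := ⌊x⌋₊ with hNdef
  have hfl : ∀ n : ℕ, ⌊x / (n : ℝ)⌋₊ = N / n := fun n => Nat.floor_div_natCast x n
  have hfl1 : ∀ n : ℕ, ⌊x / ((n : ℝ) + 1)⌋₊ = N / (n + 1) := by
    intro n
    rw [show ((n : ℝ) + 1) = ((n + 1 : ℕ) : ℝ) by push_cast; ring, Nat.floor_div_natCast]
  have hsqrt : ⌊Real.sqrt x⌋₊ = N.sqrt := by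
    rw [Nat.floor_eq_iff (Real.sqrt_nonneg x)]
    constructor
    · rw [Real.le_sqrt (by positivity) hx0]
      have h1 : (N.sqrt : ℝ) ^ 2 ≤ (N : ℝ) := by exact_mod_cast Nat.sqrt_le' N
      have h2 : (N : ℝ) ≤ x := Nat.floor_le hx0
      linarith
    · rw [show ((N.sqrt : ℝ) + 1) = ((N.sqrt + 1 : ℕ) : ℝ) by push_cast; ring]
      have h1 : Real.sqrt x < ((N.sqrt + 1 : ℕ) : ℝ) := by
        rw [Real.sqrt_lt' (by positivity)]
        have h2 : x < (N : ℝ) + 1 := Nat.lt_floor_add_one x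
        have h3 : ((N : ℝ) + 1) ≤ ((N.sqrt + 1 : ℕ) : ℝ) ^ 2 := by
          have := Nat.lt_succ_sqrt' N
          have : (N : ℝ) < ((N.sqrt + 1 : ℕ) : ℝ) ^ 2 := by exact_mod_cast this
          have h4 : ((N : ℝ) : ℝ) + 1 ≤ ((N.sqrt + 1 : ℕ) : ℝ) ^ 2 := by
            have h5 : (N : ℕ) + 1 ≤ (N.sqrt + 1) ^ 2 := Nat.lt_succ_sqrt' N
            exact_mod_cast h5
          exact h4
        linarith
      exact h1
  have hcond : (x < (⌊Real.sqrt x⌋₊ : ℝ) * ((⌊Real.sqrt x⌋₊ : ℝ) + 1)) ↔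
      N < N.sqrt * (N.sqrt + 1) := by
    rw [hsqrt]
    rw [show ((N.sqrt : ℝ) * ((N.sqrt : ℝ) + 1)) = ((N.sqrt * (N.sqrt + 1) : ℕ) : ℝ) by
      push_cast; ring]
    exact (Nat.floor_lt hx0).symm
  simp only [hfl, hfl1, hsqrt, hU]
  rw [hsqrt] at hcond
  simp only [hcond]
  exact billal_nat u v N hN
end

section
/- As x → ∞, ∑_{n ≤ √x} φ(n)·([x/n] − [x/(n+1)]) = (x log x)/(2ζ(2)) + O(x). -/
open Finset Real

set_option maxHeartbeats 1000000

section aux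
open ArithmeticFunction
open scoped ArithmeticFunction.Moebius ArithmeticFunction.zeta

lemma abs_mu_le (d : ℕ) : |(μ d : ℝ)| ≤ 1 := by
  have := ArithmeticFunction.abs_moebius_le_one (n := d)
  exact_mod_cast (by exact_mod_cast this : |(μ d : ℝ)| ≤ (1:ℤ))

lemma mu_term_abs_le (d : ℕ) : |(μ d : ℝ) / (d:ℝ)^2| ≤ 1/(d:ℝ)^2 := by
  rw [abs_div, abs_pow, Nat.abs_cast]
  gcongr
  exact abs_mu_le d

lemma summable_inv_sq : Summable (fun d : ℕ => 1/(d:ℝ)^2) := by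
  simpa using Real.summable_one_div_nat_pow.mpr one_lt_two

lemma summable_mu_abs : Summable (fun d : ℕ => |(μ d : ℝ) / (d:ℝ)^2|) :=
  Summable.of_nonneg_of_le (fun d => abs_nonneg _) mu_term_abs_le summable_inv_sq

lemma summable_mu : Summable (fun d : ℕ => (μ d : ℝ) / (d:ℝ)^2) :=
  summable_mu_abs.of_abs

lemma tsum_mu : ∑' d : ℕ, (μ d : ℝ) / (d:ℝ)^2 = 6 / π^2 := by
  have h2 : (1:ℝ) < (2:ℂ).re := by norm_num
  have hz : LSeries (fun n => (ζ n : ℂ)) 2 * LSeries (fun n => (μ n : ℂ)) 2 = 1 :=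
    ArithmeticFunction.LSeries_zeta_mul_Lseries_moebius h2
  have hzeta : LSeries (fun n => (ζ n : ℂ)) 2 = (π:ℂ)^2/6 := by
    rw [LSeries_zeta_eq_riemannZeta h2, riemannZeta_two]
  have hπ : (π:ℂ)^2 ≠ 0 := by
    simp [Real.pi_ne_zero]
  have hmu : LSeries (fun n => (μ n : ℂ)) 2 = 6/(π:ℂ)^2 := by
    rw [hzeta] at hz
    field_simp at hz ⊢
    linear_combination hz
  have hterm : ∀ n : ℕ, LSeries.term (fun n => (μ n : ℂ)) 2 n = ((μ n : ℝ) / (n:ℝ)^2 : ℝ) := by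
    intro n
    rcases eq_or_ne n 0 with rfl | hn
    · simp [LSeries.term]
    · rw [LSeries.term_of_ne_zero hn]
      push_cast
      rw [Complex.cpow_ofNat]
  have : LSeries (fun n => (μ n : ℂ)) 2 = ((∑' d : ℕ, (μ d : ℝ) / (d:ℝ)^2 : ℝ) : ℂ) := by
    rw [LSeries, tsum_congr hterm, ← Complex.ofReal_tsum]
  rw [this] at hmu
  have h6 : ((6 / π^2 : ℝ) : ℂ) = 6/(π:ℂ)^2 := by push_cast; ring
  exact Complex.ofReal_injective (hmu.trans h6.symm)

lemma partial_mu_close (N : ℕ) (hN : 1 ≤ N) :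
    |(∑ d ∈ Icc 1 N, (μ d : ℝ) / (d:ℝ)^2) - 6 / π^2| ≤ 1/(N:ℝ) := by
  have hrange : range (N+1) = insert 0 (Icc 1 N) := by
    ext k; simp [Finset.mem_range, Finset.mem_Icc, Finset.mem_insert]; omega
  have h0 : (0:ℕ) ∉ Icc 1 N := by simp
  have hpart : ∑ d ∈ Icc 1 N, (μ d : ℝ) / (d:ℝ)^2
      = ∑ d ∈ range (N+1), (μ d : ℝ) / (d:ℝ)^2 := by
    rw [hrange, Finset.sum_insert h0]; simp
  have hsum := summable_mu
  have htail := (Summable.sum_add_tsum_nat_add (f := fun d : ℕ => (μ d : ℝ) / (d:ℝ)^2) (N+1) hsum)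
  rw [← tsum_mu, hpart]
  have heq : (∑ d ∈ range (N+1), (μ d : ℝ) / (d:ℝ)^2) - (∑' d : ℕ, (μ d : ℝ) / (d:ℝ)^2)
      = -(∑' i : ℕ, (μ (i+(N+1)) : ℝ) / ((i+(N+1):ℕ):ℝ)^2) := by
    rw [← htail]; ring
  rw [heq, abs_neg]
  have habs : |∑' i : ℕ, (μ (i+(N+1)) : ℝ) / ((i+(N+1):ℕ):ℝ)^2|
      ≤ ∑' i : ℕ, |(μ (i+(N+1)) : ℝ) / ((i+(N+1):ℕ):ℝ)^2| := by
    have hs : Summable (fun i : ℕ => ‖(μ (i+(N+1)) : ℝ) / ((i+(N+1):ℕ):ℝ)^2‖) := by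
      simpa only [Real.norm_eq_abs] using ((summable_nat_add_iff (N+1)).mpr summable_mu_abs)
    simpa only [Real.norm_eq_abs] using norm_tsum_le_tsum_norm hs
  refine habs.trans ?_
  have hsummable : Summable (fun i : ℕ => |(μ (i+(N+1)) : ℝ) / ((i+(N+1):ℕ):ℝ)^2|) :=
    ((summable_nat_add_iff (N+1)).mpr summable_mu_abs)
  apply Summable.tsum_le_of_sum_le hsummable
  intro u
  obtain ⟨M, hM⟩ := u.exists_nat_subset_range
  calc ∑ i ∈ u, |(μ (i+(N+1)) : ℝ) / ((i+(N+1):ℕ):ℝ)^2|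
      ≤ ∑ i ∈ range M, |(μ (i+(N+1)) : ℝ) / ((i+(N+1):ℕ):ℝ)^2| :=
        Finset.sum_le_sum_of_subset_of_nonneg hM (fun _ _ _ => abs_nonneg _)
    _ ≤ ∑ i ∈ range M, (1/((i:ℝ)+N) - 1/((i:ℝ)+N+1)) := by
        apply Finset.sum_le_sum
        intro i _
        have h1 : (0:ℝ) < (i:ℝ) + N := by positivity
        have h2 : (0:ℝ) < (i:ℝ) + N + 1 := by positivity
        have hle : |(μ (i+(N+1)) : ℝ) / ((i+(N+1):ℕ):ℝ)^2| ≤ 1/((i:ℝ)+N+1)^2 := by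
          have := mu_term_abs_le (i + (N+1))
          convert this using 3 <;> push_cast <;> ring
        refine hle.trans ?_
        rw [div_sub_div _ _ h1.ne' h2.ne', div_le_div_iff₀ (by positivity) (by positivity)]
        nlinarith [h1, h2]
    _ = 1/((0:ℝ)+N) - 1/((M:ℝ)+N) := by
        have h := Finset.sum_range_sub' (f := fun i : ℕ => 1/((i:ℝ)+N)) M
        push_cast at h
        rw [← h]
        exact Finset.sum_congr rfl fun i _ => by ring
    _ ≤ 1/(N:ℝ) := by
        have h3 : (0:ℝ) ≤ 1/((M:ℝ)+N) := by positivity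
        simp only [zero_add]
        linarith

lemma sum_inv_sq_le (N : ℕ) : ∑ d ∈ Icc 1 N, 1/(d:ℝ)^2 ≤ 2 - 1/(N:ℝ) := by
  induction N with
  | zero => simp
  | succ N ih =>
    rw [Finset.sum_Icc_succ_top (by omega)]
    rcases Nat.eq_zero_or_pos N with rfl | hN
    · norm_num
    · have hN1 : (1:ℝ) ≤ (N:ℝ) := by exact_mod_cast hN
      have key : 1/((N:ℝ)+1)^2 ≤ 1/(N:ℝ) - 1/((N:ℝ)+1) := by
        rw [div_sub_div _ _ (by positivity) (by positivity), div_le_div_iff₀ (by positivity) (by positivity)]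
        nlinarith
      push_cast
      linarith

lemma sum_inv_nsq_le (N : ℕ) : ∑ n ∈ Icc 1 N, 1/((n:ℝ)*((n:ℝ)+1)) ≤ 1 := by
  have key : ∀ M : ℕ, ∑ n ∈ Icc 1 M, 1/((n:ℝ)*((n:ℝ)+1)) = 1 - 1/((M:ℝ)+1) := by
    intro M
    induction M with
    | zero => simp
    | succ M ih =>
      rw [Finset.sum_Icc_succ_top (by omega), ih]
      have h1 : ((M:ℝ)+1) ≠ 0 := by positivity
      have h2 : ((M:ℝ)+2) ≠ 0 := by positivity
      push_cast
      field_simp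
      ring
  rw [key N]
  have : (0:ℝ) ≤ 1/((N:ℝ)+1) := by positivity
  linarith

lemma sum_d32_le (N : ℕ) (hN : 1 ≤ N) :
    ∑ d ∈ Icc 1 N, 1/((d:ℝ) * Real.sqrt d) ≤ 3 - 2/Real.sqrt N := by
  induction N with
  | zero => omega
  | succ N ih =>
    rcases Nat.eq_zero_or_pos N with rfl | hN'
    · norm_num
    · rw [Finset.sum_Icc_succ_top (by omega)]
      have ihh := ih hN'
      have hN1 : (1:ℝ) ≤ (N:ℝ) := by exact_mod_cast hN'
      set a := Real.sqrt N with ha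
      set b := Real.sqrt ((N:ℝ)+1) with hb
      have ha2 : a^2 = N := Real.sq_sqrt (by positivity)
      have hb2 : b^2 = (N:ℝ)+1 := Real.sq_sqrt (by positivity)
      have hapos : 0 < a := Real.sqrt_pos.mpr (by positivity)
      have hbpos : 0 < b := Real.sqrt_pos.mpr (by positivity)
      have hab : a ≤ b := Real.sqrt_le_sqrt (by linarith)
      have key : 1/(((N:ℝ)+1) * b) ≤ 2/a - 2/b := by
        rw [div_sub_div _ _ hapos.ne' hbpos.ne',
          div_le_div_iff₀ (by positivity) (by positivity)]
        have hb2' : (N:ℝ)+1 = b^2 := hb2.symm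
        nlinarith [mul_pos hapos hbpos, sq_nonneg (b-a), sq_nonneg (a+b)]
      have hcast : Real.sqrt ((N+1:ℕ):ℝ) = b := by push_cast; rfl
      push_cast
      rw [hcast] at *
      linarith

lemma sum_logd_le (N : ℕ) : ∑ d ∈ Icc 1 N, Real.log d / (d:ℝ)^2 ≤ 6 := by
  rcases Nat.eq_zero_or_pos N with rfl | hN
  · simp
  calc ∑ d ∈ Icc 1 N, Real.log d / (d:ℝ)^2
      ≤ ∑ d ∈ Icc 1 N, 2/((d:ℝ) * Real.sqrt d) := by
        apply Finset.sum_le_sum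
        intro d hd
        have hd1 : 1 ≤ d := (Finset.mem_Icc.mp hd).1
        have hd1' : (1:ℝ) ≤ (d:ℝ) := by exact_mod_cast hd1
        have hs : Real.sqrt d * Real.sqrt d = (d:ℝ) := Real.mul_self_sqrt (by positivity)
        have hspos : 0 < Real.sqrt d := Real.sqrt_pos.mpr (by linarith)
        have hlog : Real.log d ≤ 2 * Real.sqrt d := by
          have h1 : Real.log d = 2 * Real.log (Real.sqrt d) := by
            rw [Real.log_sqrt (by positivity)]; ring
          have h2 : Real.log (Real.sqrt d) ≤ Real.sqrt d - 1 :=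
            Real.log_le_sub_one_of_pos hspos
          linarith
        rw [div_le_div_iff₀ (by positivity) (by positivity)]
        calc Real.log d * ((d:ℝ) * Real.sqrt d) ≤ (2 * Real.sqrt d) * ((d:ℝ) * Real.sqrt d) := by
              apply mul_le_mul_of_nonneg_right hlog (by positivity)
          _ = 2 * (d:ℝ)^2 := by rw [sq]; nlinarith [hs]
    _ = 2 * ∑ d ∈ Icc 1 N, 1/((d:ℝ) * Real.sqrt d) := by
        rw [Finset.mul_sum]
        exact Finset.sum_congr rfl fun d _ => by ring
    _ ≤ 2 * (3 - 2/Real.sqrt N) := by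
        have := sum_d32_le N hN
        linarith [this]
    _ ≤ 6 := by
        have : 0 ≤ 2/Real.sqrt N := by positivity
        linarith

lemma swap_divisors (N : ℕ) (F : ℕ → ℕ → ℝ) :
    ∑ n ∈ Icc 1 N, ∑ p ∈ n.divisorsAntidiagonal, F p.1 p.2
      = ∑ d ∈ Icc 1 N, ∑ m ∈ Icc 1 (N/d), F d m := by
  rw [Finset.sum_sigma', Finset.sum_sigma']
  apply Finset.sum_nbij' (i := fun x => ⟨x.2.1, x.2.2⟩) (j := fun x => ⟨x.1 * x.2, (x.1, x.2)⟩)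
  · rintro ⟨n, d, m⟩ h
    simp only [Finset.mem_sigma, Finset.mem_Icc, Nat.mem_divisorsAntidiagonal] at h ⊢
    obtain ⟨⟨h1, h2⟩, h3, h4⟩ := h
    have hd : 0 < d := by
      rcases Nat.eq_zero_or_pos d with rfl | h; · simp at h3; omega
      exact h
    have hm : 0 < m := by
      rcases Nat.eq_zero_or_pos m with rfl | h; · simp at h3; omega
      exact h
    refine ⟨⟨hd, ?_⟩, hm, ?_⟩
    · calc d ≤ d * m := Nat.le_mul_of_pos_right d hm
        _ = n := h3
        _ ≤ N := h2
    · rw [Nat.le_div_iff_mul_le hd]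
      rw [mul_comm] at h3
      omega
  · rintro ⟨d, m⟩ h
    simp only [Finset.mem_sigma, Finset.mem_Icc] at h
    obtain ⟨⟨h1, h2⟩, h3, h4⟩ := h
    rw [Nat.le_div_iff_mul_le h1] at h4
    have hdm : 0 < d * m := Nat.mul_pos h1 h3
    simp only [Finset.mem_sigma, Finset.mem_Icc, Nat.mem_divisorsAntidiagonal]
    exact ⟨⟨hdm, by rw [mul_comm] at h4; exact h4⟩, trivial, hdm.ne'⟩
  · rintro ⟨n, d, m⟩ h
    simp only [Finset.mem_sigma, Finset.mem_Icc, Nat.mem_divisorsAntidiagonal] at h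
    obtain ⟨⟨h1, h2⟩, h3, h4⟩ := h
    simp [h3]
  · rintro ⟨d, m⟩ _; rfl
  · rintro ⟨n, d, m⟩ _; rfl

lemma sum_Icc_inv_eq_harmonic (M : ℕ) : ∑ m ∈ Icc 1 M, 1/(m:ℝ) = (harmonic M : ℝ) := by
  rw [harmonic]
  push_cast
  induction M with
  | zero => simp
  | succ M ih =>
    rw [Finset.sum_Icc_succ_top (by omega), Finset.sum_range_succ, ih]
    push_cast
    ring

lemma U_eq (N : ℕ) :
    ∑ n ∈ Icc 1 N, (Nat.totient n : ℝ)/(n:ℝ)^2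
      = ∑ d ∈ Icc 1 N, (μ d:ℝ)/(d:ℝ)^2 * (harmonic (N/d) : ℝ) := by
  have hinv : ∀ n > 0, ∑ p ∈ n.divisorsAntidiagonal, (μ p.1 : ℝ) * (p.2:ℝ)
      = (Nat.totient n : ℝ) := by
    refine (ArithmeticFunction.sum_eq_iff_sum_mul_moebius_eq
      (f := fun n => (Nat.totient n : ℝ)) (g := fun n => (n:ℝ))).mp ?_
    intro n _
    exact_mod_cast congrArg (Nat.cast : ℕ → ℝ) (Nat.sum_totient n)
  calc ∑ n ∈ Icc 1 N, (Nat.totient n : ℝ)/(n:ℝ)^2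
      = ∑ n ∈ Icc 1 N, ∑ p ∈ n.divisorsAntidiagonal, (μ p.1:ℝ)/((p.1:ℝ)^2 * (p.2:ℝ)) := by
        apply Finset.sum_congr rfl
        intro n hn
        obtain ⟨hn1, _⟩ := Finset.mem_Icc.mp hn
        rw [← hinv n hn1, Finset.sum_div]
        apply Finset.sum_congr rfl
        rintro ⟨a, b⟩ hp
        obtain ⟨hab, hn0⟩ := Nat.mem_divisorsAntidiagonal.mp hp
        have ha : 0 < a := by
          rcases Nat.eq_zero_or_pos a with rfl | h; · simp at hab; omega
          exact h
        have hb : 0 < b := by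
          rcases Nat.eq_zero_or_pos b with rfl | h; · simp at hab; omega
          exact h
        have ha' : (0:ℝ) < (a:ℝ) := by exact_mod_cast ha
        have hb' : (0:ℝ) < (b:ℝ) := by exact_mod_cast hb
        have : ((n:ℕ):ℝ) = (a:ℝ) * (b:ℝ) := by exact_mod_cast hab.symm
        simp only
        rw [this]
        field_simp
    _ = ∑ d ∈ Icc 1 N, ∑ m ∈ Icc 1 (N/d), (μ d:ℝ)/((d:ℝ)^2 * (m:ℝ)) :=
        swap_divisors N (fun d m => (μ d:ℝ)/((d:ℝ)^2 * (m:ℝ)))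
    _ = ∑ d ∈ Icc 1 N, (μ d:ℝ)/(d:ℝ)^2 * (harmonic (N/d) : ℝ) := by
        apply Finset.sum_congr rfl
        intro d _
        rw [← sum_Icc_inv_eq_harmonic, Finset.mul_sum]
        apply Finset.sum_congr rfl
        intro m _
        rw [div_mul_eq_div_div]
        ring

lemma U_est (N : ℕ) (hN : 1 ≤ N) :
    |(∑ n ∈ Icc 1 N, (Nat.totient n : ℝ)/(n:ℝ)^2) - 6/π^2 * Real.log N| ≤ 9 := by
  have hNpos : (0:ℝ) < N := by exact_mod_cast hN
  rw [U_eq]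
  have hsplit : ∀ d ∈ Icc 1 N, (μ d:ℝ)/(d:ℝ)^2 * (harmonic (N/d) : ℝ)
      = (μ d:ℝ)/(d:ℝ)^2 * Real.log N - (μ d:ℝ)/(d:ℝ)^2 * Real.log d
        + (μ d:ℝ)/(d:ℝ)^2 * ((harmonic (N/d) : ℝ) - (Real.log N - Real.log d)) := by
    intro d _; ring
  rw [Finset.sum_congr rfl hsplit]
  rw [Finset.sum_add_distrib, Finset.sum_sub_distrib, ← Finset.sum_mul]
  have hE : ∀ d ∈ Icc 1 N, |(harmonic (N/d) : ℝ) - (Real.log N - Real.log d)| ≤ 1 := by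
    intro d hd
    obtain ⟨hd1, hd2⟩ := Finset.mem_Icc.mp hd
    have hdpos : (0:ℝ) < d := by exact_mod_cast hd1
    have hdN : (d:ℝ) ≤ N := by exact_mod_cast hd2
    have hy : (1:ℝ) ≤ (N:ℝ)/(d:ℝ) := (one_le_div hdpos).mpr hdN
    have hfloor : ⌊(N:ℝ)/(d:ℝ)⌋₊ = N / d := by
      rw [Nat.floor_div_natCast, Nat.floor_natCast]
    have h1 := log_le_harmonic_floor ((N:ℝ)/d) (by positivity)
    have h2 := harmonic_floor_le_one_add_log ((N:ℝ)/d) hy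
    rw [hfloor] at h1 h2
    have hlog : Real.log ((N:ℝ)/d) = Real.log N - Real.log d :=
      Real.log_div hNpos.ne' hdpos.ne'
    rw [hlog] at h1 h2
    rw [abs_le]; constructor <;> linarith
  have bound1 : |(∑ d ∈ Icc 1 N, (μ d:ℝ)/(d:ℝ)^2) * Real.log N - 6/π^2 * Real.log N| ≤ 1 := by
    rw [← sub_mul, abs_mul]
    have h1 := partial_mu_close N hN
    have hlogN : |Real.log N| ≤ (N:ℝ) := by
      rw [abs_of_nonneg (Real.log_natCast_nonneg N)]
      have := Real.log_le_sub_one_of_pos hNpos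
      linarith
    calc |(∑ d ∈ Icc 1 N, (μ d:ℝ)/(d:ℝ)^2) - 6/π^2| * |Real.log N|
        ≤ (1/(N:ℝ)) * (N:ℝ) := by
          apply mul_le_mul h1 hlogN (abs_nonneg _) (by positivity)
      _ = 1 := by field_simp
  have bound2 : |∑ d ∈ Icc 1 N, (μ d:ℝ)/(d:ℝ)^2 * Real.log d| ≤ 6 := by
    refine (Finset.abs_sum_le_sum_abs _ _).trans ?_
    refine le_trans ?_ (sum_logd_le N)
    apply Finset.sum_le_sum
    intro d hd
    obtain ⟨hd1, _⟩ := Finset.mem_Icc.mp hd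
    have hdpos : (0:ℝ) < d := by exact_mod_cast hd1
    have hd1' : (1:ℝ) ≤ (d:ℝ) := by exact_mod_cast hd1
    rw [abs_mul, abs_div, abs_pow, Nat.abs_cast, abs_of_nonneg (Real.log_natCast_nonneg d),
      div_mul_eq_mul_div]
    gcongr
    exact mul_le_of_le_one_left (Real.log_natCast_nonneg d) (abs_mu_le d)
  have bound3 : |∑ d ∈ Icc 1 N, (μ d:ℝ)/(d:ℝ)^2 *
      ((harmonic (N/d) : ℝ) - (Real.log N - Real.log d))| ≤ 2 := by
    refine (Finset.abs_sum_le_sum_abs _ _).trans ?_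
    have step : ∀ d ∈ Icc 1 N, |(μ d:ℝ)/(d:ℝ)^2 *
        ((harmonic (N/d) : ℝ) - (Real.log N - Real.log d))| ≤ 1/(d:ℝ)^2 := by
      intro d hd
      rw [abs_mul]
      calc |(μ d:ℝ)/(d:ℝ)^2| * |(harmonic (N/d) : ℝ) - (Real.log N - Real.log d)|
          ≤ (1/(d:ℝ)^2) * 1 :=
            mul_le_mul (mu_term_abs_le d) (hE d hd) (abs_nonneg _) (by positivity)
        _ = 1/(d:ℝ)^2 := by ring
    refine (Finset.sum_le_sum step).trans ?_
    have := sum_inv_sq_le N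
    have : (0:ℝ) ≤ 1/(N:ℝ) := by positivity
    linarith [sum_inv_sq_le N]
  have tri : ∀ a b r t : ℝ, |a - t| ≤ 1 → |b| ≤ 6 → |r| ≤ 2 → |a - b + r - t| ≤ 9 := by
    intro a b r t h1 h2 h3
    have he : a - b + r - t = ((a - t) + -b) + r := by ring
    rw [he]
    have t1 := abs_add_le ((a - t) + -b) r
    have t2 := abs_add_le (a - t) (-b)
    rw [abs_neg] at t2
    linarith
  exact tri _ _ _ _ bound1 bound2 bound3

lemma T_est (N : ℕ) (hN : 1 ≤ N) :
    |(∑ n ∈ Icc 1 N, (Nat.totient n : ℝ)/((n:ℝ)*((n:ℝ)+1))) - 6/π^2 * Real.log N| ≤ 10 := by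
  have hdiff : |(∑ n ∈ Icc 1 N, (Nat.totient n : ℝ)/((n:ℝ)*((n:ℝ)+1)))
      - (∑ n ∈ Icc 1 N, (Nat.totient n : ℝ)/(n:ℝ)^2)| ≤ 1 := by
    rw [← Finset.sum_sub_distrib]
    refine (Finset.abs_sum_le_sum_abs _ _).trans ?_
    refine le_trans ?_ (sum_inv_nsq_le N)
    apply Finset.sum_le_sum
    intro n hn
    obtain ⟨hn1, _⟩ := Finset.mem_Icc.mp hn
    have hnpos : (0:ℝ) < n := by exact_mod_cast hn1
    have hφ : (Nat.totient n : ℝ) ≤ (n:ℝ) := by exact_mod_cast Nat.totient_le n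
    have hφ0 : (0:ℝ) ≤ (Nat.totient n : ℝ) := by positivity
    have heq : (Nat.totient n : ℝ)/((n:ℝ)*((n:ℝ)+1)) - (Nat.totient n : ℝ)/(n:ℝ)^2
        = -((Nat.totient n : ℝ)/((n:ℝ)^2*((n:ℝ)+1))) := by
      field_simp
      ring
    rw [heq, abs_neg, abs_of_nonneg (by positivity)]
    rw [div_le_div_iff₀ (by positivity) (by positivity)]
    nlinarith
  have h2 := U_est N hN
  set a := ∑ n ∈ Icc 1 N, (Nat.totient n : ℝ)/((n:ℝ)*((n:ℝ)+1))
  set b := ∑ n ∈ Icc 1 N, (Nat.totient n : ℝ)/(n:ℝ)^2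
  have : a - 6/π^2 * Real.log N = (a - b) + (b - 6/π^2 * Real.log N) := by ring
  rw [this]
  calc |(a - b) + (b - 6/π^2 * Real.log N)| ≤ |a - b| + |b - 6/π^2 * Real.log N| := abs_add_le _ _
    _ ≤ 1 + 9 := add_le_add hdiff h2
    _ = 10 := by norm_num

end aux

open ArithmeticFunction in
/-- `∑_{n ≤ √x} φ(n)([x/n] - [x/(n+1)]) = (x log x)/(2ζ(2)) + O(x)`. -/
theorem stmt_16 :
    ∃ C : ℝ, 0 < C ∧ ∀ x : ℝ, 2 ≤ x →
      |(∑ n ∈ Finset.Icc 1 ⌊Real.sqrt x⌋₊,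
          (Nat.totient n : ℝ) *
            ((⌊x / (n : ℝ)⌋₊ : ℝ) - (⌊x / ((n : ℝ) + 1)⌋₊ : ℝ))) -
        x * Real.log x * 3 / π ^ 2| ≤ C * x := by
  refine ⟨13, by norm_num, ?_⟩
  intro x hx
  set N := ⌊Real.sqrt x⌋₊ with hNdef
  have hxpos : (0:ℝ) < x := by linarith
  have hsq : (0:ℝ) ≤ Real.sqrt x := Real.sqrt_nonneg x
  have hN1 : 1 ≤ N := by
    apply Nat.le_floor
    rw [Nat.cast_one]
    exact Real.one_le_sqrt.mpr (by linarith)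
  have hNle : (N:ℝ) ≤ Real.sqrt x := Nat.floor_le hsq
  have hNpos : (0:ℝ) < N := by exact_mod_cast hN1
  have hNsq : (N:ℝ)^2 ≤ x := by
    calc (N:ℝ)^2 ≤ (Real.sqrt x)^2 := by nlinarith
      _ = x := Real.sq_sqrt hxpos.le
  have hlt : Real.sqrt x < (N:ℝ) + 1 := Nat.lt_floor_add_one _
  set T := ∑ n ∈ Icc 1 N, (Nat.totient n : ℝ)/((n:ℝ)*((n:ℝ)+1)) with hT
  -- Step A
  have stepA : |(∑ n ∈ Icc 1 N, (Nat.totient n : ℝ) *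
        ((⌊x / (n : ℝ)⌋₊ : ℝ) - (⌊x / ((n : ℝ) + 1)⌋₊ : ℝ))) - x * T| ≤ 2 * x := by
    rw [hT, Finset.mul_sum, ← Finset.sum_sub_distrib]
    refine (Finset.abs_sum_le_sum_abs _ _).trans ?_
    calc ∑ n ∈ Icc 1 N, |(Nat.totient n : ℝ) *
          ((⌊x / (n : ℝ)⌋₊ : ℝ) - (⌊x / ((n : ℝ) + 1)⌋₊ : ℝ))
          - x * ((Nat.totient n : ℝ)/((n:ℝ)*((n:ℝ)+1)))|
        ≤ ∑ n ∈ Icc 1 N, 2 * (n:ℝ) := by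
          apply Finset.sum_le_sum
          intro n hn
          obtain ⟨hn1, _⟩ := Finset.mem_Icc.mp hn
          have hnpos : (0:ℝ) < n := by exact_mod_cast hn1
          have hφ : (Nat.totient n : ℝ) ≤ (n:ℝ) := by exact_mod_cast Nat.totient_le n
          have hφ0 : (0:ℝ) ≤ (Nat.totient n : ℝ) := by positivity
          have hsplit : x * ((Nat.totient n : ℝ)/((n:ℝ)*((n:ℝ)+1)))
              = (Nat.totient n : ℝ) * (x/(n:ℝ) - x/((n:ℝ)+1)) := by
            field_simp
            ring
          rw [hsplit, ← mul_sub, abs_mul, abs_of_nonneg hφ0]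
          have hfl1 : |(⌊x / (n : ℝ)⌋₊ : ℝ) - x/(n:ℝ)| ≤ 1 := by
            have h1 : (⌊x / (n : ℝ)⌋₊ : ℝ) ≤ x/(n:ℝ) := Nat.floor_le (by positivity)
            have h2 : x/(n:ℝ) < (⌊x / (n : ℝ)⌋₊ : ℝ) + 1 := Nat.lt_floor_add_one _
            rw [abs_le]; constructor <;> linarith
          have hfl2 : |(⌊x / ((n : ℝ)+1)⌋₊ : ℝ) - x/((n:ℝ)+1)| ≤ 1 := by
            have h1 : (⌊x / ((n : ℝ)+1)⌋₊ : ℝ) ≤ x/((n:ℝ)+1) := Nat.floor_le (by positivity)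
            have h2 : x/((n:ℝ)+1) < (⌊x / ((n : ℝ)+1)⌋₊ : ℝ) + 1 := Nat.lt_floor_add_one _
            rw [abs_le]; constructor <;> linarith
          have key : |((⌊x / (n : ℝ)⌋₊ : ℝ) - (⌊x / ((n : ℝ) + 1)⌋₊ : ℝ))
              - (x/(n:ℝ) - x/((n:ℝ)+1))|
              ≤ 2 := by
            have he : ((⌊x / (n : ℝ)⌋₊ : ℝ) - (⌊x / ((n : ℝ) + 1)⌋₊ : ℝ))
                - (x/(n:ℝ) - x/((n:ℝ)+1))
                = ((⌊x / (n : ℝ)⌋₊ : ℝ) - x/(n:ℝ)) - ((⌊x / ((n : ℝ)+1)⌋₊ : ℝ) - x/((n:ℝ)+1)) := by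
              ring
            rw [he]
            calc _ ≤ |(⌊x / (n : ℝ)⌋₊ : ℝ) - x/(n:ℝ)| + |(⌊x / ((n : ℝ)+1)⌋₊ : ℝ) - x/((n:ℝ)+1)| :=
                  abs_sub _ _
              _ ≤ 2 := by linarith
          calc (Nat.totient n : ℝ) * |((⌊x / (n : ℝ)⌋₊ : ℝ) - (⌊x / ((n : ℝ) + 1)⌋₊ : ℝ))
                - (x/(n:ℝ) - x/((n:ℝ)+1))|
              ≤ (n:ℝ) * 2 := mul_le_mul hφ key (abs_nonneg _) (by positivity)
            _ = 2 * (n:ℝ) := by ring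
      _ ≤ ∑ n ∈ Icc 1 N, 2 * (N:ℝ) := by
          apply Finset.sum_le_sum
          intro n hn
          have : n ≤ N := (Finset.mem_Icc.mp hn).2
          have : (n:ℝ) ≤ (N:ℝ) := by exact_mod_cast this
          linarith
      _ = (N:ℝ) * (2 * (N:ℝ)) := by
          rw [Finset.sum_const, Nat.card_Icc]
          simp [nsmul_eq_mul]
      _ ≤ 2 * x := by nlinarith
  -- Step B : T estimate
  have hTest := T_est N hN1
  -- log N vs log x
  have hloglog : |Real.log N - Real.log (Real.sqrt x)| ≤ 1 := by
    have h1 : Real.log N ≤ Real.log (Real.sqrt x) :=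
      Real.log_le_log hNpos hNle
    have h2 : Real.log (Real.sqrt x) - Real.log N = Real.log (Real.sqrt x / N) := by
      rw [Real.log_div (by positivity) hNpos.ne']
    have h3 : Real.sqrt x / (N:ℝ) < 2 := by
      rw [div_lt_iff₀ hNpos]
      have hN1' : (1:ℝ) ≤ (N:ℝ) := by exact_mod_cast hN1
      linarith
    have h4 : Real.log (Real.sqrt x / N) ≤ Real.sqrt x / N - 1 :=
      Real.log_le_sub_one_of_pos (by positivity)
    rw [abs_le]; constructor <;> nlinarith [h2, h4, h3, h1]
  have hpi : (6:ℝ)/π^2 ≤ 1 := by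
    have := Real.pi_gt_three
    rw [div_le_one (by positivity)]
    nlinarith
  have hpi0 : (0:ℝ) < π^2 := by positivity
  have hhalf : Real.log (Real.sqrt x) = Real.log x / 2 := Real.log_sqrt hxpos.le
  -- combine
  have hTfinal : |T - x⁻¹ * (x * Real.log x * 3 / π^2)| ≤ 11 := by
    have he : x⁻¹ * (x * Real.log x * 3 / π^2) = 6/π^2 * Real.log (Real.sqrt x) := by
      rw [hhalf]
      have hx0 : x ≠ 0 := hxpos.ne'
      field_simp
      ring
    rw [he]
    have hd : T - 6/π^2 * Real.log (Real.sqrt x)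
        = (T - 6/π^2 * Real.log N) + 6/π^2 * (Real.log N - Real.log (Real.sqrt x)) := by ring
    rw [hd]
    calc _ ≤ |T - 6/π^2 * Real.log N| + |6/π^2 * (Real.log N - Real.log (Real.sqrt x))| :=
          abs_add_le _ _
      _ ≤ 10 + 1 := by
          apply add_le_add hTest
          rw [abs_mul, abs_of_nonneg (by positivity : (0:ℝ) ≤ 6/π^2)]
          calc 6/π^2 * |Real.log N - Real.log (Real.sqrt x)| ≤ 1 * 1 :=
                mul_le_mul hpi hloglog (abs_nonneg _) zero_le_one
            _ = 1 := by norm_num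
      _ = 11 := by norm_num
  have hmain : |x * T - x * Real.log x * 3 / π^2| ≤ 11 * x := by
    have he : x * T - x * Real.log x * 3 / π^2 = x * (T - x⁻¹ * (x * Real.log x * 3 / π^2)) := by
      field_simp
    rw [he, abs_mul, abs_of_pos hxpos]
    calc x * |T - x⁻¹ * (x * Real.log x * 3 / π^2)| ≤ x * 11 :=
          mul_le_mul_of_nonneg_left hTfinal hxpos.le
      _ = 11 * x := by ring
  have he2 : (∑ n ∈ Icc 1 N, (Nat.totient n : ℝ) *
        ((⌊x / (n : ℝ)⌋₊ : ℝ) - (⌊x / ((n : ℝ) + 1)⌋₊ : ℝ))) - x * Real.log x * 3 / π^2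
      = ((∑ n ∈ Icc 1 N, (Nat.totient n : ℝ) *
        ((⌊x / (n : ℝ)⌋₊ : ℝ) - (⌊x / ((n : ℝ) + 1)⌋₊ : ℝ))) - x * T)
        + (x * T - x * Real.log x * 3 / π^2) := by ring
  rw [he2]
  calc _ ≤ |(∑ n ∈ Icc 1 N, (Nat.totient n : ℝ) *
        ((⌊x / (n : ℝ)⌋₊ : ℝ) - (⌊x / ((n : ℝ) + 1)⌋₊ : ℝ))) - x * T|
        + |x * T - x * Real.log x * 3 / π^2| := abs_add_le _ _
    _ ≤ 2 * x + 11 * x := add_le_add stepA hmain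
    _ = 13 * x := by ring
end
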